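/- arXiv:1705.07507 — 4 statements merged into one kernel-verified Lean document; each statement's English description precedes it below -/
import Mathlib

section
/- Let X : [0,T] → ℝ^{n×n} be a solution of the symmetric differential Riccati equation Ẋ(t) = A X(t) + X(t) Aᵀ + Q − X(t) S X(t), X(0) = X₀, where X₀, Q and S are symmetric positive semidefinite. Then X(t) is symmetric positive semidefinite for every t ∈ [0,T]. -/
open Matrix
open scoped Matrix.Norms.L2Operator

noncomputable section

/-- The logarithmic norm `μ(A)`: the maximum of the real parts of the field of values
`F(A) = {x* A x : ‖x‖ = 1}` of `A`, viewed as a complex matrix. -/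
def logNorm {n : ℕ} (A : Matrix (Fin n) (Fin n) ℝ) : ℝ :=
  sSup {r : ℝ | ∃ x : EuclideanSpace ℂ (Fin n), ‖x‖ = 1 ∧
    r = (dotProduct (star (x : Fin n → ℂ)) ((A.map Complex.ofReal).mulVec x)).re}

/-- The function `φ₁(z) = (e^z - 1)/z = ∑_{ℓ≥0} z^ℓ/(ℓ+1)!`. -/
def phi1 (z : ℝ) : ℝ := ∑' k : ℕ, z ^ k / (Nat.factorial (k + 1) : ℝ)

/-- Matrix exponential. -/
def mexp {n : ℕ} (A : Matrix (Fin n) (Fin n) ℝ) : Matrix (Fin n) (Fin n) ℝ :=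
  NormedSpace.exp A

/-- The block Krylov subspace `K_k(A,B) = span{B, AB, …, A^{k-1}B}` (the span of
the columns of the matrices `A^i B`, `i < k`). -/
def blockKrylov {n : ℕ} {ι : Type*} (A : Matrix (Fin n) (Fin n) ℝ) (B : Matrix (Fin n) ι ℝ)
    (k : ℕ) : Submodule ℝ (Fin n → ℝ) :=
  Submodule.span ℝ {v | ∃ i < k, ∃ j, v = ((A ^ i * B)ᵀ) j}

/-- The column space of a matrix. -/
def colSpace {n m : ℕ} (V : Matrix (Fin n) (Fin m) ℝ) : Submodule ℝ (Fin n → ℝ) :=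
  Submodule.span ℝ (Set.range Vᵀ)

/-!
Write `λ(t)` for the least eigenvalue of `X(t)`, i.e. the minimum of `wᵀ X(t) w` over unit vectors.
The solution stays symmetric because `X(t)ᵀ` solves the same (locally Lipschitz) equation.
At a unit eigenvector `w` of `X(t)` for an eigenvalue `-a ≤ 0` the equation gives
`wᵀ Ẋ w = -2a wᵀ A w + wᵀ Q w - a² wᵀ S w ≥ -2a‖A‖ - a²‖S‖`, so the shifted quantity
`λ(t) + ε e^{(2‖A‖+1) t}` cannot reach `0` from above while `a‖S‖ < 1`: at the first zero,
with `w` a minimising vector, `t ↦ wᵀ X(t) w + ε e^{(2‖A‖+1) t}` would have derivative at least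
`a (1 - a‖S‖) > 0` although it decreases to `0`. Letting `ε → 0` gives `λ(t) ≥ 0`.
-/

open Set Filter Topology Metric

lemma ContinuousOn.exists_first_zero {h : ℝ → ℝ} {a b : ℝ} (hab : a ≤ b)
    (hh : ContinuousOn h (Icc a b)) (ha : 0 < h a) (hb : h b ≤ 0) :
    ∃ c ∈ Ioc a b, h c = 0 ∧ ∀ s ∈ Ico a c, 0 < h s := by
  have hzeros : IsCompact {s ∈ Icc a b | h s = 0} :=
    isCompact_Icc.of_isClosed_subset
      (hh.preimage_isClosed_of_isClosed isClosed_Icc isClosed_singleton) fun _ hs ↦ hs.1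
  obtain ⟨c, ⟨hc, hc0⟩, hleast⟩ := hzeros.exists_isLeast
    (intermediate_value_Icc' hab hh ⟨hb, ha.le⟩)
  refine ⟨c, ⟨hc.1.lt_of_ne ?_, hc.2⟩, hc0, fun s hs ↦ ?_⟩
  · rintro rfl; exact ha.ne' hc0
  by_contra! hs0
  have hsb : s ≤ b := hs.2.le.trans hc.2
  obtain ⟨r, hr, hr0⟩ :=
    intermediate_value_Icc' hs.1 (hh.mono (Icc_subset_Icc_right hsb)) ⟨hs0, ha.le⟩
  exact (hleast ⟨⟨hr.1, hr.2.trans hsb⟩, hr0⟩).not_gt (hr.2.trans_lt hs.2)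

lemma HasDerivAt.nonpos_of_forall_le_left {φ : ℝ → ℝ} {d a t : ℝ} (hφ : HasDerivAt φ d t)
    (hat : a < t) (hle : ∀ s ∈ Ico a t, φ t ≤ φ s) : d ≤ 0 := by
  have hslope := (hasDerivAt_iff_tendsto_slope.1 hφ).mono_left
    (nhdsWithin_mono t fun _ hs ↦ ne_of_lt hs : 𝓝[<] t ≤ 𝓝[≠] t)
  refine le_of_tendsto hslope ?_
  filter_upwards [Ioo_mem_nhdsLT hat] with s hs
  rw [slope_def_field]
  exact div_nonpos_of_nonneg_of_nonpos (sub_nonneg.2 (hle s ⟨hs.1.le, hs.2⟩)) (by linarith [hs.2])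

lemma HasDerivAt.linearMap_comp {E F : Type*} [NormedAddCommGroup E] [NormedSpace ℝ E]
    [FiniteDimensional ℝ E] [NormedAddCommGroup F] [NormedSpace ℝ F] (L : E →ₗ[ℝ] F)
    {f : ℝ → E} {f' : E} {t : ℝ} (hf : HasDerivAt f f' t) :
    HasDerivAt (fun s ↦ L (f s)) (L f') t :=
  L.toContinuousLinearMap.hasFDerivAt.comp_hasDerivAt t hf

variable {m : Type*} [Fintype m]

def quadForm (M : Matrix m m ℝ) (w : EuclideanSpace ℝ m) : ℝ := w.ofLp ⬝ᵥ M *ᵥ w.ofLp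

lemma quadForm_eq_inner (M : Matrix m m ℝ) (w : EuclideanSpace ℝ m) :
    quadForm M w = inner ℝ w (WithLp.toLp 2 (M *ᵥ w.ofLp)) := by
  rw [EuclideanSpace.inner_eq_star_dotProduct, star_trivial, dotProduct_comm]; rfl

lemma ofLp_dotProduct_self_eq_norm_sq (w : EuclideanSpace ℝ m) : w.ofLp ⬝ᵥ w.ofLp = ‖w‖ ^ 2 := by
  rw [← real_inner_self_eq_norm_sq, EuclideanSpace.inner_eq_star_dotProduct, star_trivial]

lemma quadForm_smul (M : Matrix m m ℝ) (c : ℝ) (w : EuclideanSpace ℝ m) :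
    quadForm M (c • w) = c ^ 2 * quadForm M w := by
  simp only [quadForm, WithLp.ofLp_smul, mulVec_smul, smul_dotProduct, dotProduct_smul,
    smul_eq_mul]
  ring

lemma continuous_quadForm (M : Matrix m m ℝ) : Continuous (quadForm M) := by
  unfold quadForm; fun_prop

lemma continuous_uncurry_quadForm : Continuous (Function.uncurry (quadForm (m := m))) := by
  unfold quadForm; fun_prop

lemma Matrix.PosSemidef.quadForm_nonneg {M : Matrix m m ℝ} (hM : M.PosSemidef)
    (w : EuclideanSpace ℝ m) : 0 ≤ quadForm M w := by
  have := hM.dotProduct_mulVec_nonneg w.ofLp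
  rwa [star_trivial] at this

lemma posSemidef_of_quadForm_nonneg {M : Matrix m m ℝ} (hM : M.IsHermitian)
    (h : ∀ w : EuclideanSpace ℝ m, ‖w‖ = 1 → 0 ≤ quadForm M w) : M.PosSemidef := by
  refine .of_dotProduct_mulVec_nonneg hM fun v ↦ ?_
  rw [star_trivial]
  obtain hv | hv := eq_or_ne (WithLp.toLp 2 v : EuclideanSpace ℝ m) 0
  · simp [show v = 0 from congrArg WithLp.ofLp hv]
  have hscaled := h _ (norm_smul_inv_norm (𝕜 := ℝ) hv)
  rw [quadForm_smul] at hscaled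
  exact nonneg_of_mul_nonneg_right hscaled (by positivity)

/-- The least eigenvalue of `M` when `M` is symmetric (and `0` when `m` is empty). -/
def minQuadForm (M : Matrix m m ℝ) : ℝ := sInf (quadForm M '' sphere 0 1)

lemma continuous_minQuadForm : Continuous (minQuadForm (m := m)) :=
  (isCompact_sphere 0 1).continuous_sInf continuous_uncurry_quadForm

lemma minQuadForm_le (M : Matrix m m ℝ) {w : EuclideanSpace ℝ m} (hw : ‖w‖ = 1) :
    minQuadForm M ≤ quadForm M w :=
  csInf_le ((isCompact_sphere 0 1).bddBelow_image (continuous_quadForm M).continuousOn)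
    ⟨w, mem_sphere_zero_iff_norm.2 hw, rfl⟩

lemma exists_quadForm_eq_minQuadForm [Nonempty m] (M : Matrix m m ℝ) :
    ∃ w : EuclideanSpace ℝ m, ‖w‖ = 1 ∧ quadForm M w = minQuadForm M := by
  obtain ⟨w, hw, hmin⟩ := (isCompact_sphere (0 : EuclideanSpace ℝ m) 1).exists_sInf_image_eq
    (NormedSpace.sphere_nonempty.2 zero_le_one) (continuous_quadForm M).continuousOn
  exact ⟨w, mem_sphere_zero_iff_norm.1 hw, hmin.symm⟩

lemma Matrix.PosSemidef.minQuadForm_nonneg [Nonempty m] {M : Matrix m m ℝ} (hM : M.PosSemidef) :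
    0 ≤ minQuadForm M := by
  obtain ⟨w, -, hmin⟩ := exists_quadForm_eq_minQuadForm M
  exact hmin ▸ hM.quadForm_nonneg w

section DecidableEq

variable [DecidableEq m]

lemma quadForm_sub_smul_one (M : Matrix m m ℝ) (c : ℝ) (w : EuclideanSpace ℝ m) :
    quadForm (M - c • 1) w = quadForm M w - c * ‖w‖ ^ 2 := by
  simp only [quadForm, sub_mulVec, smul_mulVec, one_mulVec, dotProduct_sub, dotProduct_smul,
    smul_eq_mul, ofLp_dotProduct_self_eq_norm_sq]

lemma abs_quadForm_le (M : Matrix m m ℝ) (w : EuclideanSpace ℝ m) :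
    |quadForm M w| ≤ ‖M‖ * ‖w‖ ^ 2 := by
  rw [quadForm_eq_inner]
  calc _ ≤ ‖w‖ * ‖WithLp.toLp 2 (M *ᵥ w.ofLp)‖ := abs_real_inner_le_norm _ _
    _ ≤ ‖w‖ * (‖M‖ * ‖w‖) := by gcongr; exact M.l2_opNorm_mulVec w
    _ = ‖M‖ * ‖w‖ ^ 2 := by ring

lemma mulVec_eq_of_quadForm_eq_minQuadForm {M : Matrix m m ℝ} (hM : M.IsHermitian)
    {w : EuclideanSpace ℝ m} (hw : ‖w‖ = 1) (hmin : quadForm M w = minQuadForm M) :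
    M *ᵥ w.ofLp = minQuadForm M • w.ofLp := by
  set c := minQuadForm M
  have hshift : (M - c • 1).PosSemidef := by
    refine posSemidef_of_quadForm_nonneg (hM.sub (isHermitian_one.smul (IsSelfAdjoint.all c)))
      fun v hv ↦ ?_
    rw [quadForm_sub_smul_one, hv]
    linarith [minQuadForm_le M hv]
  have hker : (M - c • 1) *ᵥ w.ofLp = 0 := by
    rw [← hshift.dotProduct_mulVec_zero_iff, star_trivial]
    change quadForm (M - c • 1) w = 0
    rw [quadForm_sub_smul_one, hw, hmin]
    ring
  rwa [sub_mulVec, smul_mulVec, one_mulVec, sub_eq_zero] at hker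

lemma hasDerivAt_quadForm {X : ℝ → Matrix m m ℝ} {D : Matrix m m ℝ} {t : ℝ}
    (hX : HasDerivAt X D t) (w : EuclideanSpace ℝ m) :
    HasDerivAt (fun s ↦ quadForm (X s) w) (quadForm D w) t :=
  HasDerivAt.linearMap_comp (E := Matrix m m ℝ)
    (dotProductBilin ℝ ℝ w.ofLp ∘ₗ (mulVecBilin ℝ ℝ).flip w.ofLp) hX

lemma hasDerivAt_transpose {X : ℝ → Matrix m m ℝ} {D : Matrix m m ℝ} {t : ℝ}
    (hX : HasDerivAt X D t) : HasDerivAt (fun s ↦ (X s)ᵀ) Dᵀ t :=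
  HasDerivAt.linearMap_comp (E := Matrix m m ℝ) (transposeLinearEquiv m m ℝ ℝ).toLinearMap hX

end DecidableEq

def riccatiOp (A Q S M : Matrix m m ℝ) : Matrix m m ℝ := A * M + M * Aᵀ + Q - M * S * M

section Riccati

variable {A Q S : Matrix m m ℝ}

lemma riccatiOp_transpose (hQ : Q.IsSymm) (hS : S.IsSymm) (M : Matrix m m ℝ) :
    (riccatiOp A Q S M)ᵀ = riccatiOp A Q S Mᵀ := by
  simp only [riccatiOp, transpose_sub, transpose_add, transpose_mul, transpose_transpose,
    hQ.eq, hS.eq, Matrix.mul_assoc]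
  abel

lemma quadForm_riccatiOp_of_mulVec_eq_smul {M : Matrix m m ℝ} (hM : M.IsSymm)
    {w : EuclideanSpace ℝ m} {c : ℝ} (hw : M *ᵥ w.ofLp = c • w.ofLp) :
    quadForm (riccatiOp A Q S M) w =
      2 * c * quadForm A w + quadForm Q w - c ^ 2 * quadForm S w := by
  have hw' : w.ofLp ᵥ* M = c • w.ofLp := by rw [← mulVec_transpose, hM.eq, hw]
  have hA : w.ofLp ⬝ᵥ Aᵀ *ᵥ w.ofLp = w.ofLp ⬝ᵥ A *ᵥ w.ofLp := by
    rw [dotProduct_mulVec, vecMul_transpose, dotProduct_comm]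
  simp only [quadForm, riccatiOp, sub_mulVec, add_mulVec, ← mulVec_mulVec, hw, mulVec_smul,
    dotProduct_sub, dotProduct_add, dotProduct_smul, dotProduct_mulVec w.ofLp M, hw',
    smul_dotProduct, smul_eq_mul, hA]
  ring

variable [DecidableEq m]

lemma contDiff_riccatiOp : ContDiff ℝ 1 (riccatiOp A Q S) := by
  unfold riccatiOp; fun_prop

lemma isSymm_of_hasDerivAt_riccatiOp (hQ : Q.IsSymm) (hS : S.IsSymm) {X : ℝ → Matrix m m ℝ}
    {T : ℝ} (hX : ∀ t ∈ Icc 0 T, HasDerivAt X (riccatiOp A Q S (X t)) t) (hX0 : (X 0).IsSymm) :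
    ∀ t ∈ Icc 0 T, (X t).IsSymm := by
  have hXT : ∀ t ∈ Icc 0 T, HasDerivAt (fun s ↦ (X s)ᵀ) (riccatiOp A Q S (X t)ᵀ) t :=
    fun t ht ↦ riccatiOp_transpose hQ hS (X t) ▸ hasDerivAt_transpose (hX t ht)
  have hXc := HasDerivAt.continuousOn hX
  have hXTc := HasDerivAt.continuousOn hXT
  set trajectories := X '' Icc 0 T ∪ (fun s ↦ (X s)ᵀ) '' Icc 0 T
  obtain ⟨L, hL⟩ := contDiff_riccatiOp.locallyLipschitz.locallyLipschitzOn
    |>.exists_lipschitzOnWith_of_compact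
      ((isCompact_Icc.image_of_continuousOn hXc).union (isCompact_Icc.image_of_continuousOn hXTc))
  intro t ht
  exact ODE_solution_unique_of_mem_Icc_right (v := fun _ ↦ riccatiOp A Q S)
    (s := fun _ ↦ trajectories)
    (fun _ _ ↦ hL) hXTc (fun s hs ↦ (hXT s (Ico_subset_Icc_self hs)).hasDerivWithinAt)
    (fun s hs ↦ .inr ⟨s, Ico_subset_Icc_self hs, rfl⟩) hXc
    (fun s hs ↦ (hX s (Ico_subset_Icc_self hs)).hasDerivWithinAt)
    (fun s hs ↦ .inl ⟨s, Ico_subset_Icc_self hs, rfl⟩) hX0 ht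

lemma quadForm_riccatiOp_add_pos (hQ : Q.PosSemidef) {M : Matrix m m ℝ} (hM : M.IsSymm)
    {w : EuclideanSpace ℝ m} (hw : ‖w‖ = 1) {a : ℝ} (heig : M *ᵥ w.ofLp = (-a) • w.ofLp)
    (ha : 0 < a) (haS : a * ‖S‖ < 1) :
    0 < quadForm (riccatiOp A Q S M) w + (2 * ‖A‖ + 1) * a := by
  rw [quadForm_riccatiOp_of_mulVec_eq_smul hM heig]
  have hA := abs_le.1 (abs_quadForm_le A w)
  have hS := abs_le.1 (abs_quadForm_le S w)
  have hQw := hQ.quadForm_nonneg w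
  rw [hw, one_pow, mul_one] at hA hS
  nlinarith

lemma quadForm_add_exp_pos (hQ : Q.PosSemidef) {X : ℝ → Matrix m m ℝ} {T : ℝ}
    (hX : ∀ t ∈ Icc 0 T, HasDerivAt X (riccatiOp A Q S (X t)) t)
    (hsymm : ∀ t ∈ Icc 0 T, (X t).IsSymm) (hX0 : (X 0).PosSemidef)
    {ε : ℝ} (hε : 0 < ε) (hεS : ε * Real.exp ((2 * ‖A‖ + 1) * T) * ‖S‖ < 1)
    {t : ℝ} (ht : t ∈ Icc 0 T) {w : EuclideanSpace ℝ m} (hw : ‖w‖ = 1) :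
    0 < quadForm (X t) w + ε * Real.exp ((2 * ‖A‖ + 1) * t) := by
  set K := 2 * ‖A‖ + 1
  set b : ℝ → ℝ := fun s ↦ ε * Real.exp (K * s)
  by_contra! hneg
  have : Nonempty m := by
    by_contra! hm
    simp [Subsingleton.elim w 0] at hw
  have hsub : Icc 0 t ⊆ Icc 0 T := Icc_subset_Icc_right ht.2
  have hcont : ContinuousOn (fun s ↦ minQuadForm (X s) + b s) (Icc 0 t) :=
    (continuous_minQuadForm.comp_continuousOn ((HasDerivAt.continuousOn hX).mono hsub)).add
      (by fun_prop)
  obtain ⟨t', ht', hzero, hbefore⟩ := hcont.exists_first_zero ht.1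
    (by simp only [b, mul_zero, Real.exp_zero, mul_one]; linarith [hX0.minQuadForm_nonneg])
    (by linarith [minQuadForm_le (X t) hw])
  have ht'T : t' ∈ Icc 0 T := hsub (Ioc_subset_Icc_self ht')
  obtain ⟨v, hv, hmin⟩ := exists_quadForm_eq_minQuadForm (X t')
  have heig : X t' *ᵥ v.ofLp = (-b t') • v.ofLp := by
    rw [mulVec_eq_of_quadForm_eq_minQuadForm (isHermitian_iff_isSymm.2 (hsymm t' ht'T)) hv hmin]
    congr 1
    linarith
  have hb : HasDerivAt b (K * b t') t' := by
    refine (((hasDerivAt_id t').const_mul K).exp.const_mul ε).congr_deriv ?_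
    simp only [b, id]
    ring
  have hbT : b t' * ‖S‖ < 1 := lt_of_le_of_lt (by simp only [b]; gcongr; exact ht'T.2) hεS
  have hpos := quadForm_riccatiOp_add_pos (A := A) hQ (hsymm t' ht'T) hv heig (by positivity) hbT
  have hnonpos := ((hasDerivAt_quadForm (hX t' ht'T) v).add hb).nonpos_of_forall_le_left ht'.1
    fun s hs ↦ show quadForm (X t') v + b t' ≤ quadForm (X s) v + b s by
      linarith [hbefore s hs, minQuadForm_le (X s) hv]
  linarith

end Riccati

theorem dre_positivity_general {n : ℕ} (T : ℝ)
    (A Q S X₀ : Matrix (Fin n) (Fin n) ℝ)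
    (hQ : Q.PosSemidef) (hS : S.PosSemidef) (hX₀ : X₀.PosSemidef)
    (X : ℝ → Matrix (Fin n) (Fin n) ℝ)
    (hX : ∀ t ∈ Set.Icc (0:ℝ) T,
      HasDerivAt X (A * X t + X t * Aᵀ + Q - X t * S * X t) t)
    (hX0 : X 0 = X₀) :
    ∀ t ∈ Set.Icc (0:ℝ) T, (X t).PosSemidef := by
  have hric : ∀ t ∈ Icc 0 T, HasDerivAt X (riccatiOp A Q S (X t)) t := hX
  have hsymm := isSymm_of_hasDerivAt_riccatiOp (isHermitian_iff_isSymm.1 hQ.1)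
    (isHermitian_iff_isSymm.1 hS.1) hric (hX0 ▸ isHermitian_iff_isSymm.1 hX₀.1)
  intro t ht
  refine posSemidef_of_quadForm_nonneg (isHermitian_iff_isSymm.2 (hsymm t ht)) fun w hw ↦ ?_
  set K := 2 * ‖A‖ + 1
  have hsmall : ∀ᶠ ε in 𝓝[>] 0, ε * Real.exp (K * T) * ‖S‖ < 1 :=
    tendsto_nhdsWithin_of_tendsto_nhds ((by fun_prop : Continuous fun ε : ℝ ↦
      ε * Real.exp (K * T) * ‖S‖).tendsto' 0 0 (by simp)) |>.eventually (gt_mem_nhds one_pos)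
  have hpos : ∀ᶠ ε in 𝓝[>] 0, 0 ≤ quadForm (X t) w + ε * Real.exp (K * t) := by
    filter_upwards [self_mem_nhdsWithin, hsmall] with ε hε hεS
    exact (quadForm_add_exp_pos hQ hric hsymm (hX0 ▸ hX₀) hε hεS ht hw).le
  refine ge_of_tendsto (tendsto_nhdsWithin_of_tendsto_nhds ?_) hpos
  exact (by fun_prop : Continuous fun ε : ℝ ↦ quadForm (X t) w + ε * Real.exp (K * t)).tendsto' 0 _
    (by simp)

/-- Positivity of the exact flow of the symmetric DRE. -/
theorem dre_positivity {n : ℕ} (T : ℝ) (hT : 0 ≤ T)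
    (A Q S X₀ : Matrix (Fin n) (Fin n) ℝ)
    (hQ : Q.PosSemidef) (hS : S.PosSemidef) (hX₀ : X₀.PosSemidef)
    (X : ℝ → Matrix (Fin n) (Fin n) ℝ)
    (hX : ∀ t ∈ Set.Icc (0:ℝ) T,
      HasDerivAt X (A * X t + X t * Aᵀ + Q - X t * S * X t) t)
    (hX0 : X 0 = X₀) :
    ∀ t ∈ Set.Icc (0:ℝ) T, (X t).PosSemidef :=
  dre_positivity_general T A Q S X₀ hQ hS hX₀ X hX hX0
end
end

section
/- Let A ∈ ℝ^{n×n} and B ∈ ℝ^{n×ℓ}. Let V_k ∈ ℝ^{n×kℓ} be a matrix with orthonormal columns whose column space equals the block Krylov subspace K_k(A,B), and set H_k = V_kᵀ A V_k. Then for every t ≥ 0, ‖e^{tA} B − V_k e^{tH_k} V_kᵀ B‖ ≤ 2 max{1, e^{tμ(A)}} (‖tA‖^k / k!) ‖B‖. -/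
open Matrix
open scoped Matrix.Norms.L2Operator

noncomputable section

/-!
The Krylov projection reproduces the Taylor polynomial of degree `k - 1` exactly: `V Vᵀ` fixes
every column of `A ^ j * B` for `j < k`, so `V H ^ j Vᵀ B = A ^ j B`, and the error
`e^{tA} B - V e^{tH} Vᵀ B` is the difference of the two Taylor remainders. The remainder of order
`k` of `e^{sM}` is at most `sup_{u ≤ s} ‖e^{uM}‖ (s ‖M‖) ^ k / k!`, because it is the solution of
`R_{k+1}' = M R_k` vanishing at `0`; and `‖e^{uM}‖ ≤ e^{uμ}` as soon as `⟪v, M v⟫ ≤ μ ‖v‖²`, by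
Grönwall's inequality for `‖e^{uM} x‖²`. Since `V` is an isometry, the compression `H = Vᵀ A V`
inherits both `⟪v, H v⟫ ≤ μ(A) ‖v‖²` and `‖H‖ ≤ ‖A‖` from `A`.
-/

open NormedSpace Set
open scoped Nat RealInnerProductSpace

section TaylorRemainder

variable {𝔸 : Type*}

def expTaylor [Ring 𝔸] [Algebra ℝ 𝔸] (x : 𝔸) (k : ℕ) (s : ℝ) : 𝔸 :=
  ∑ j ∈ Finset.range k, (s ^ j / j !) • x ^ j

variable [NormedRing 𝔸] [NormedAlgebra ℝ 𝔸]

theorem expTaylor_succ_zero (x : 𝔸) (k : ℕ) : expTaylor x (k + 1) 0 = 1 := by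
  simp [expTaylor, Finset.sum_range_succ']

theorem hasDerivAt_expTaylor_succ (x : 𝔸) (k : ℕ) (s : ℝ) :
    HasDerivAt (expTaylor x (k + 1)) (x * expTaylor x k s) s := by
  have hsum : HasDerivAt (expTaylor x (k + 1))
      (∑ j ∈ Finset.range (k + 1), ((j * s ^ (j - 1)) / j !) • x ^ j) s :=
    HasDerivAt.fun_sum fun j _ => ((hasDerivAt_pow j s).div_const _).smul_const _
  convert hsum using 1
  rw [Finset.sum_range_succ', expTaylor, Finset.mul_sum]
  simp only [Nat.cast_zero, zero_mul, zero_div, zero_smul, add_zero]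
  refine Finset.sum_congr rfl fun j _ => ?_
  rw [mul_smul_comm, ← pow_succ', Nat.factorial_succ, Nat.add_sub_cancel]
  congr 1
  push_cast
  field_simp

variable [CompleteSpace 𝔸]

theorem norm_exp_smul_sub_expTaylor_le {x : 𝔸} {C t : ℝ}
    (hC : ∀ s ∈ Icc 0 t, ‖exp (s • x)‖ ≤ C) (k : ℕ) :
    ∀ s ∈ Icc 0 t, ‖exp (s • x) - expTaylor x k s‖ ≤ C * (s * ‖x‖) ^ k / k ! := by
  induction k with
  | zero => simpa [expTaylor] using hC
  | succ k ih =>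
    refine image_norm_le_of_norm_deriv_right_le_deriv_boundary
      (f' := fun s => x * (exp (s • x) - expTaylor x k s))
      (B' := fun s => ‖x‖ * (C * (s * ‖x‖) ^ k / k !)) ?_ (fun s _ => ?_) ?_ (fun s => ?_)
      (fun s hs => ?_)
    · exact fun s _ => ((hasDerivAt_exp_smul_const' x s).sub
        (hasDerivAt_expTaylor_succ x k s)).continuousAt.continuousWithinAt
    · rw [mul_sub]
      exact ((hasDerivAt_exp_smul_const' x s).sub
        (hasDerivAt_expTaylor_succ x k s)).hasDerivWithinAt
    · simp [expTaylor_succ_zero]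
    · refine ((((hasDerivAt_id s).mul_const ‖x‖).pow (k + 1)).const_mul C).div_const
        ((k + 1) ! : ℝ) |>.congr_deriv ?_
      rw [Nat.factorial_succ, id]
      push_cast
      field_simp
    · exact (norm_mul_le _ _).trans
        (mul_le_mul_of_nonneg_left (ih s (Ico_subset_Icc_self hs)) (norm_nonneg x))

end TaylorRemainder

theorem ContinuousLinearMap.norm_exp_smul_le_of_inner_le {E : Type*} [NormedAddCommGroup E]
    [InnerProductSpace ℝ E] [CompleteSpace E] {T : E →L[ℝ] E} {μ : ℝ}
    (hT : ∀ x, ⟪x, T x⟫ ≤ μ * ‖x‖ ^ 2) {t : ℝ} (ht : 0 ≤ t) :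
    ‖exp (t • T)‖ ≤ Real.exp (t * μ) := by
  refine ContinuousLinearMap.opNorm_le_bound _ (Real.exp_nonneg _) fun x => ?_
  have hflow : ∀ s, HasDerivAt (fun s => exp (s • T) x) (T (exp (s • T) x)) s := fun s =>
    (ContinuousLinearMap.apply ℝ E x).hasFDerivAt.comp_hasDerivAt s
      (hasDerivAt_exp_smul_const' T s)
  have hsq : ∀ s, HasDerivAt (fun s => ‖exp (s • T) x‖ ^ 2)
      (2 * ⟪exp (s • T) x, T (exp (s • T) x)⟫) s := fun s => (hflow s).norm_sq
  have hgron := le_gronwallBound_of_liminf_deriv_right_le (a := 0) (b := t) (δ := ‖x‖ ^ 2)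
    (K := 2 * μ) (ε := 0)
    (fun s _ => (hsq s).continuousAt.continuousWithinAt)
    (fun s _ _ hr => (hsq s).hasDerivWithinAt.liminf_right_slope_le hr)
    (by simp) (fun s _ => by linarith [hT (exp (s • T) x)]) t ⟨ht, le_rfl⟩
  rw [gronwallBound_ε0, sub_zero] at hgron
  refine pow_le_pow_iff_left₀ (norm_nonneg _) (by positivity) two_ne_zero |>.mp ?_
  calc ‖exp (t • T) x‖ ^ 2 ≤ ‖x‖ ^ 2 * Real.exp (2 * μ * t) := hgron
    _ = (Real.exp (t * μ) * ‖x‖) ^ 2 := by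
      rw [mul_pow, ← Real.exp_nat_mul]
      ring_nf

theorem Matrix.norm_exp_smul_le_of_dotProduct_mulVec_le {m : Type*} [Fintype m] [DecidableEq m]
    {M : Matrix m m ℝ} {μ : ℝ} (hM : ∀ v, v ⬝ᵥ M *ᵥ v ≤ μ * (v ⬝ᵥ v)) {t : ℝ} (ht : 0 ≤ t) :
    ‖exp (t • M)‖ ≤ Real.exp (t * μ) := by
  have hcont : Continuous (toEuclideanCLM (n := m) (𝕜 := ℝ)) :=
    (AddMonoidHomClass.isometry_of_norm _ fun _ => rfl).continuous
  rw [cstar_norm_def, map_exp_of_mem_ball (𝕂 := ℝ) _ hcont _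
    (by simp [expSeries_radius_eq_top]), map_smul]
  refine ContinuousLinearMap.norm_exp_smul_le_of_inner_le (fun x => ?_) ht
  rw [inner_toEuclideanCLM, ← real_inner_self_eq_norm_sq, EuclideanSpace.inner_eq_star_dotProduct,
    star_trivial]
  exact hM _

theorem Matrix.norm_exp_smul_le_max_one {m : Type*} [Fintype m] [DecidableEq m] {M : Matrix m m ℝ}
    {μ : ℝ} (hM : ∀ v, v ⬝ᵥ M *ᵥ v ≤ μ * (v ⬝ᵥ v)) {t : ℝ} :
    ∀ s ∈ Icc 0 t, ‖exp (s • M)‖ ≤ max 1 (Real.exp (t * μ)) := by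
  rintro s ⟨hs, hst⟩
  refine (norm_exp_smul_le_of_dotProduct_mulVec_le hM hs).trans ?_
  rcases le_total 0 μ with hμ | hμ
  · exact le_max_of_le_right (Real.exp_le_exp.2 (by nlinarith))
  · exact le_max_of_le_left (Real.exp_le_one_iff.2 (by nlinarith))

theorem re_star_dotProduct_mulVec_le_logNorm {n : ℕ} (A : Matrix (Fin n) (Fin n) ℝ)
    {x : EuclideanSpace ℂ (Fin n)} (hx : ‖x‖ = 1) :
    (star (x : Fin n → ℂ) ⬝ᵥ (A.map Complex.ofReal *ᵥ x)).re ≤ logNorm A := by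
  set T := toEuclideanCLM (n := Fin n) (𝕜 := ℂ) (A.map Complex.ofReal)
  refine le_csSup ⟨‖T‖, ?_⟩ ⟨x, hx, rfl⟩
  rintro _ ⟨y, hy, rfl⟩
  calc (star (y : Fin n → ℂ) ⬝ᵥ (A.map Complex.ofReal *ᵥ y)).re
      = RCLike.re (inner ℂ y (T y)) := by
        rw [EuclideanSpace.inner_eq_star_dotProduct, ofLp_toEuclideanCLM, dotProduct_comm]
        rfl
    _ ≤ ‖y‖ * ‖T y‖ := re_inner_le_norm _ _
    _ ≤ ‖T‖ := by simpa [hy] using T.le_opNorm y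

theorem dotProduct_mulVec_le_logNorm {n : ℕ} (A : Matrix (Fin n) (Fin n) ℝ) (v : Fin n → ℝ) :
    v ⬝ᵥ A *ᵥ v ≤ logNorm A * (v ⬝ᵥ v) := by
  obtain rfl | hv := eq_or_ne v 0
  · simp
  have hvv : 0 < v ⬝ᵥ v :=
    lt_of_le_of_ne (Finset.sum_nonneg fun i _ => mul_self_nonneg (v i))
      (Ne.symm (dotProduct_self_eq_zero.not.mpr hv))
  set c := √(v ⬝ᵥ v)
  have hc : 0 < c := Real.sqrt_pos.mpr hvv
  set u := c⁻¹ • v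
  have huu : u ⬝ᵥ u = 1 := by
    simp only [u, smul_dotProduct, dotProduct_smul, smul_eq_mul]
    field_simp
    rw [Real.sq_sqrt hvv.le]
  have hx : ‖(WithLp.toLp 2 fun i => (u i : ℂ) : EuclideanSpace ℂ (Fin n))‖ = 1 := by
    rw [EuclideanSpace.norm_eq, ← Real.sqrt_one, ← huu]
    simp [dotProduct, sq]
  have hre := re_star_dotProduct_mulVec_le_logNorm A hx
  have hcomplex : (star (fun i => (u i : ℂ)) ⬝ᵥ (A.map Complex.ofReal *ᵥ fun i => (u i : ℂ))).re
      = u ⬝ᵥ A *ᵥ u := by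
    simp [dotProduct, mulVec]
  calc v ⬝ᵥ A *ᵥ v = (u ⬝ᵥ A *ᵥ u) * (v ⬝ᵥ v) := by
        simp only [u, smul_dotProduct, dotProduct_smul, mulVec_smul, smul_eq_mul]
        field_simp
        rw [Real.sq_sqrt hvv.le]
    _ ≤ logNorm A * (v ⬝ᵥ v) := by
        rw [← hcomplex]
        exact mul_le_mul_of_nonneg_right hre hvv.le

section Isometry

variable {m p : Type*} [Fintype m] [Fintype p] [DecidableEq p] {V : Matrix m p ℝ}

theorem Matrix.dotProduct_transpose_mul_mul_mulVec_le (hV : Vᵀ * V = 1) {M : Matrix m m ℝ}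
    {μ : ℝ} (hM : ∀ v, v ⬝ᵥ M *ᵥ v ≤ μ * (v ⬝ᵥ v)) (v : p → ℝ) :
    v ⬝ᵥ (Vᵀ * M * V) *ᵥ v ≤ μ * (v ⬝ᵥ v) := by
  have hVv : ∀ w, v ⬝ᵥ Vᵀ *ᵥ w = (V *ᵥ v) ⬝ᵥ w := fun w => by
    rw [dotProduct_mulVec, vecMul_transpose]
  calc v ⬝ᵥ (Vᵀ * M * V) *ᵥ v = (V *ᵥ v) ⬝ᵥ M *ᵥ (V *ᵥ v) := by
        rw [← mulVec_mulVec, ← mulVec_mulVec, hVv]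
    _ ≤ μ * ((V *ᵥ v) ⬝ᵥ (V *ᵥ v)) := hM _
    _ = μ * (v ⬝ᵥ v) := by rw [← hVv, mulVec_mulVec, hV, one_mulVec]

theorem Matrix.l2_opNorm_le_one_of_transpose_mul_self (hV : Vᵀ * V = 1) : ‖V‖ ≤ 1 := by
  have hVV := l2_opNorm_conjTranspose_mul_self V
  rw [conjTranspose_eq_transpose_of_trivial, hV, cstar_norm_def, map_one] at hVV
  have h1 : ‖(1 : EuclideanSpace ℝ p →L[ℝ] EuclideanSpace ℝ p)‖ ≤ 1 :=
    ContinuousLinearMap.norm_id_le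
  nlinarith [norm_nonneg V]

variable [DecidableEq m]

theorem Matrix.l2_opNorm_transpose_le_one_of_transpose_mul_self (hV : Vᵀ * V = 1) :
    ‖Vᵀ‖ ≤ 1 := by
  rw [← conjTranspose_eq_transpose_of_trivial, l2_opNorm_conjTranspose]
  exact l2_opNorm_le_one_of_transpose_mul_self hV

theorem Matrix.l2_opNorm_transpose_mul_mul_le (hV : Vᵀ * V = 1) (M : Matrix m m ℝ) :
    ‖Vᵀ * M * V‖ ≤ ‖M‖ :=
  calc ‖Vᵀ * M * V‖ ≤ ‖Vᵀ‖ * ‖M‖ * ‖V‖ :=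
        (l2_opNorm_mul _ _).trans (by gcongr; exact l2_opNorm_mul _ _)
    _ ≤ 1 * ‖M‖ * 1 := by
        gcongr
        exacts [l2_opNorm_transpose_le_one_of_transpose_mul_self hV,
          l2_opNorm_le_one_of_transpose_mul_self hV]
    _ = ‖M‖ := by ring

theorem Matrix.l2_opNorm_mul_mul_transpose_mul_le (hV : Vᵀ * V = 1) {q : Type*} [Fintype q]
    [DecidableEq q] (X : Matrix p p ℝ) (B : Matrix m q ℝ) :
    ‖V * X * Vᵀ * B‖ ≤ ‖X‖ * ‖B‖ :=
  calc ‖V * X * Vᵀ * B‖ ≤ ‖V‖ * ‖X‖ * ‖Vᵀ‖ * ‖B‖ := by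
        refine (l2_opNorm_mul _ _).trans ?_
        gcongr
        refine (l2_opNorm_mul _ _).trans ?_
        gcongr
        exact l2_opNorm_mul _ _
    _ ≤ 1 * ‖X‖ * 1 * ‖B‖ := by
        gcongr
        exacts [l2_opNorm_le_one_of_transpose_mul_self hV,
          l2_opNorm_transpose_le_one_of_transpose_mul_self hV]
    _ = ‖X‖ * ‖B‖ := by ring

end Isometry

section Krylov

variable {n m : ℕ} {ι : Type*} [Fintype ι] {A : Matrix (Fin n) (Fin n) ℝ}
  {B : Matrix (Fin n) ι ℝ} {k : ℕ} {V : Matrix (Fin n) (Fin m) ℝ}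

theorem mulVec_transpose_mulVec_of_mem_colSpace (hV : Vᵀ * V = 1) {w : Fin n → ℝ}
    (hw : w ∈ colSpace V) : V *ᵥ (Vᵀ *ᵥ w) = w := by
  rw [colSpace, show Set.range Vᵀ = Set.range V.col from rfl, ← range_mulVecLin] at hw
  obtain ⟨y, rfl⟩ := hw
  rw [mulVecLin_apply, mulVec_mulVec y Vᵀ V, hV, one_mulVec]

theorem mul_transpose_mul_pow_mul (hV : Vᵀ * V = 1) (hK : blockKrylov A B k ≤ colSpace V)
    {j : ℕ} (hj : j < k) : V * (Vᵀ * (A ^ j * B)) = A ^ j * B := by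
  classical
  refine ext_of_mulVec_single fun c => ?_
  rw [← mulVec_mulVec, ← mulVec_mulVec, mulVec_single_one]
  exact mulVec_transpose_mulVec_of_mem_colSpace hV (hK (Submodule.subset_span ⟨j, hj, c, rfl⟩))

theorem pow_transpose_mul_mul_mul (hV : Vᵀ * V = 1) (hK : blockKrylov A B k ≤ colSpace V)
    {j : ℕ} (hj : j ≤ k) : (Vᵀ * A * V) ^ j * (Vᵀ * B) = Vᵀ * (A ^ j * B) := by
  induction j with
  | zero => simp
  | succ j ih =>
    calc (Vᵀ * A * V) ^ (j + 1) * (Vᵀ * B) = Vᵀ * (A * (V * (Vᵀ * (A ^ j * B)))) := by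
          rw [pow_succ', Matrix.mul_assoc, ih (by omega)]
          simp only [Matrix.mul_assoc]
      _ = Vᵀ * (A ^ (j + 1) * B) := by
          rw [mul_transpose_mul_pow_mul hV hK (by omega), pow_succ', Matrix.mul_assoc]

theorem mul_expTaylor_transpose_mul_mul (hV : Vᵀ * V = 1)
    (hK : blockKrylov A B k ≤ colSpace V) (s : ℝ) :
    V * expTaylor (Vᵀ * A * V) k s * Vᵀ * B = expTaylor A k s * B := by
  simp only [expTaylor, Matrix.mul_sum, Matrix.sum_mul, Matrix.mul_smul, Matrix.smul_mul]
  refine Finset.sum_congr rfl fun j hj => ?_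
  rw [Finset.mem_range] at hj
  rw [Matrix.mul_assoc, Matrix.mul_assoc, pow_transpose_mul_mul_mul hV hK hj.le,
    mul_transpose_mul_pow_mul hV hK hj]

end Krylov

/-- Krylov subspace approximation of the matrix exponential times a block:
if `V_k ∈ ℝ^{n×kℓ}` has orthonormal columns with column space equal to `K_k(A,B)` and
`H_k = V_kᵀ A V_k`, then `‖e^{tA}B − V_k e^{tH_k} V_kᵀ B‖ ≤ 2 max{1,e^{tμ(A)}} ‖tA‖^k/k! ‖B‖`. -/
theorem krylov_exp_error {n ℓ : ℕ} (A : Matrix (Fin n) (Fin n) ℝ)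
    (B : Matrix (Fin n) (Fin ℓ) ℝ) (k : ℕ)
    (V : Matrix (Fin n) (Fin (k * ℓ)) ℝ) (hV : Vᵀ * V = 1)
    (hspan : colSpace V = blockKrylov A B k) :
    ∀ t : ℝ, 0 ≤ t →
      ‖mexp (t • A) * B - V * mexp (t • (Vᵀ * A * V)) * Vᵀ * B‖ ≤
        2 * max 1 (Real.exp (t * logNorm A)) * (‖t • A‖ ^ k / (Nat.factorial k : ℝ)) * ‖B‖ := by
  intro t ht
  set H := Vᵀ * A * V
  set C := max 1 (Real.exp (t * logNorm A))
  have hA := dotProduct_mulVec_le_logNorm A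
  have htA : t * ‖A‖ = ‖t • A‖ := by rw [norm_smul, Real.norm_of_nonneg ht]
  have hRA : ‖exp (t • A) - expTaylor A k t‖ ≤ C * ‖t • A‖ ^ k / k ! :=
    htA ▸ norm_exp_smul_sub_expTaylor_le (norm_exp_smul_le_max_one hA) k t ⟨ht, le_rfl⟩
  have hRH : ‖exp (t • H) - expTaylor H k t‖ ≤ C * ‖t • A‖ ^ k / k ! := by
    refine (norm_exp_smul_sub_expTaylor_le (norm_exp_smul_le_max_one
      (dotProduct_transpose_mul_mul_mulVec_le hV hA)) k t ⟨ht, le_rfl⟩).trans ?_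
    rw [← htA]
    gcongr
    exact l2_opNorm_transpose_mul_mul_le hV A
  have hsplit : mexp (t • A) * B - V * mexp (t • H) * Vᵀ * B
      = (exp (t • A) - expTaylor A k t) * B - V * (exp (t • H) - expTaylor H k t) * Vᵀ * B := by
    rw [Matrix.sub_mul, Matrix.mul_sub, Matrix.sub_mul, Matrix.sub_mul,
      mul_expTaylor_transpose_mul_mul hV hspan.ge]
    simp only [mexp]
    abel
  calc ‖mexp (t • A) * B - V * mexp (t • H) * Vᵀ * B‖
      ≤ ‖exp (t • A) - expTaylor A k t‖ * ‖B‖ + ‖exp (t • H) - expTaylor H k t‖ * ‖B‖ := by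
        rw [hsplit]
        exact (norm_sub_le _ _).trans (add_le_add (l2_opNorm_mul _ _)
          (l2_opNorm_mul_mul_transpose_mul_le hV _ _))
    _ ≤ C * ‖t • A‖ ^ k / k ! * ‖B‖ + C * ‖t • A‖ ^ k / k ! * ‖B‖ := by gcongr
    _ = 2 * C * (‖t • A‖ ^ k / k !) * ‖B‖ := by ring
end
end

section
/- Let A ∈ ℝ^{n×n}, Z ∈ ℝ^{n×p}, C ∈ ℝ^{n×q}, and let X : [0,T] → ℝ^{n×n} solve the differential Lyapunov equation Ẋ(t) = A X(t) + X(t) Aᵀ + C Cᵀ, X(0) = Z Zᵀ. Let V_k be a matrix with orthonormal columns spanning the block Krylov subspace K_k(A, [Z C]), set H_k = V_kᵀ A V_k, let Y_k solve the projected Lyapunov equation Ẏ_k(t) = H_k Y_k(t) + Y_k(t) H_kᵀ + (V_kᵀC)(V_kᵀC)ᵀ with Y_k(0) = (V_kᵀZ)(V_kᵀZ)ᵀ, and set X_k(t) = V_k Y_k(t) V_kᵀ. Then, writing X₀ = Z Zᵀ and Q = C Cᵀ, for every t ∈ [0,T]: ‖X(t) − X_k(t)‖ ≤ 4 max{1,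 e^{2tμ(A)}} ‖A‖^k ( (t^k/k!) ‖X₀‖ + (t^{k+1}/(k+1)!) ‖Q‖ ). -/
open Matrix
open scoped Matrix.Norms.L2Operator

noncomputable section

/-!
The Galerkin approximation `V Y Vᵀ` is itself the solution of a differential Lyapunov equation,
namely the one with the compressed data `P A P`, `P Z`, `P C`, where `P = V Vᵀ` is the orthogonal
projection onto the Krylov space. By variation of constants both solutions are built from the Gram
matrices of `e^{sA} W` and of `e^{sPAP} P W` (for `W = Z` at `s = t`, and for `W = C` integrated
over `s ∈ [0, t]`), so it suffices to compare these. Since the columns of `A^i W` lie in the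
Krylov space for `i < k`, we have `(PAP)^i P W = A^i W`: the two exponentials share their Taylor
polynomial of degree `k - 1`, and the Taylor remainders are at most `M ‖A‖^k s^k / k!` when `M`
bounds the exponentials on `[0, s]`.

For `M`: if `⟪T x, x⟫ ≤ c ‖x‖²` for all `x`, Gronwall applied to `‖e^{sT} x‖²` gives
`‖e^{sT}‖ ≤ e^{sc}`. Compression by `P` keeps this inequality only for `c ≥ 0`, so we take
`c = max 0 μ(A)` for both `A` and `P A P`, and `M² = e^{2t max 0 μ(A)} = max 1 e^{2tμ(A)}`.
-/

open NormedSpace Set Finset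
open scoped RealInnerProductSpace Nat

theorem hasDerivAt_pow_succ_div_factorial (k : ℕ) (s : ℝ) :
    HasDerivAt (fun s : ℝ => s ^ (k + 1) / (k + 1)!) (s ^ k / k !) s := by
  refine ((hasDerivAt_pow (k + 1) s).div_const _).congr_deriv ?_
  rw [Nat.factorial_succ, Nat.cast_mul, Nat.add_sub_cancel]
  field_simp

section NormedAlgebra

variable {𝔸 : Type*} [NormedRing 𝔸] [NormedAlgebra ℝ 𝔸]

def expTaylorRemainder (a : 𝔸) (k : ℕ) (s : ℝ) : 𝔸 :=
  exp (s • a) - ∑ i ∈ range k, (s ^ i / i !) • a ^ i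

theorem expTaylorRemainder_succ (a : 𝔸) (k : ℕ) (s : ℝ) :
    expTaylorRemainder a (k + 1) s = expTaylorRemainder a k s - (s ^ k / k !) • a ^ k := by
  simp only [expTaylorRemainder, sum_range_succ, sub_add_eq_sub_sub]

theorem expTaylorRemainder_succ_zero (a : 𝔸) (k : ℕ) : expTaylorRemainder a (k + 1) 0 = 0 := by
  simp [expTaylorRemainder, sum_range_succ']

variable [CompleteSpace 𝔸]

theorem hasDerivAt_expTaylorRemainder_succ (a : 𝔸) (k : ℕ) (s : ℝ) :
    HasDerivAt (expTaylorRemainder a (k + 1)) (a * expTaylorRemainder a k s) s := by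
  induction k with
  | zero =>
    unfold expTaylorRemainder
    simpa using (hasDerivAt_exp_smul_const' a s).sub_const 1
  | succ k ih =>
    rw [funext (expTaylorRemainder_succ a (k + 1)), expTaylorRemainder_succ, mul_sub,
      mul_smul_comm, ← pow_succ']
    exact ih.sub ((hasDerivAt_pow_succ_div_factorial k s).smul_const (a ^ (k + 1)))

theorem norm_expTaylorRemainder_le (a : 𝔸) {M t : ℝ} (hM : ∀ s ∈ Icc 0 t, ‖exp (s • a)‖ ≤ M)
    (k : ℕ) :
    ∀ s ∈ Icc 0 t, ‖expTaylorRemainder a k s‖ ≤ M * ‖a‖ ^ k * (s ^ k / k !) := by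
  induction k with
  | zero => simpa [expTaylorRemainder] using hM
  | succ k ih =>
    refine image_norm_le_of_norm_deriv_right_le_deriv_boundary
      (f' := fun s => a * expTaylorRemainder a k s)
      (fun s _ => (hasDerivAt_expTaylorRemainder_succ a k s).continuousAt.continuousWithinAt)
      (fun s _ => (hasDerivAt_expTaylorRemainder_succ a k s).hasDerivWithinAt)
      (by simp [expTaylorRemainder_succ_zero])
      (fun s => (hasDerivAt_pow_succ_div_factorial k s).const_mul (M * ‖a‖ ^ (k + 1)))
      fun s hs => ?_
    calc ‖a * expTaylorRemainder a k s‖ ≤ ‖a‖ * (M * ‖a‖ ^ k * (s ^ k / k !)) :=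
          (norm_mul_le _ _).trans <|
            mul_le_mul_of_nonneg_left (ih s (Ico_subset_Icc_self hs)) (norm_nonneg a)
      _ = M * ‖a‖ ^ (k + 1) * (s ^ k / k !) := by ring

theorem sylvester_duhamel {a b q : 𝔸} {F : ℝ → 𝔸} {t : ℝ} (ht : 0 ≤ t)
    (hF : ∀ s ∈ Icc 0 t, HasDerivAt F (a * F s + F s * b + q) s) :
    F t = exp (t • a) * F 0 * exp (t • b) + ∫ s in 0..t, exp (s • a) * q * exp (s • b) := by
  have hL (s : ℝ) : HasDerivAt (fun s => exp ((t - s) • a)) (-(exp ((t - s) • a) * a)) s := by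
    simpa [Function.comp_def] using
      (hasDerivAt_exp_smul_const a (t - s)).scomp s ((hasDerivAt_id s).const_sub t)
  have hR (s : ℝ) : HasDerivAt (fun s => exp ((t - s) • b)) (-(b * exp ((t - s) • b))) s := by
    simpa [Function.comp_def] using
      (hasDerivAt_exp_smul_const' b (t - s)).scomp s ((hasDerivAt_id s).const_sub t)
  -- differentiating `e^{(t-s)a} F(s) e^{(t-s)b}`, the terms `a F` and `F b` cancel
  have hΦ : ∀ s ∈ uIcc 0 t, HasDerivAt (fun s => exp ((t - s) • a) * F s * exp ((t - s) • b))
      (exp ((t - s) • a) * q * exp ((t - s) • b)) s := by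
    intro s hs
    rw [uIcc_of_le ht] at hs
    refine (((hL s).mul (hF s hs)).mul (hR s)).congr_deriv ?_
    simp only [Pi.mul_apply, mul_add, add_mul, mul_neg, neg_mul, mul_assoc]
    abel
  have hcont : Continuous fun s : ℝ => exp ((t - s) • a) * q * exp ((t - s) • b) :=
    continuous_iff_continuousAt.2 fun s =>
      ((hL s).continuousAt.mul continuousAt_const).mul (hR s).continuousAt
  have hftc := intervalIntegral.integral_eq_sub_of_hasDerivAt hΦ (hcont.intervalIntegrable 0 t)
  rw [intervalIntegral.integral_comp_sub_left (fun s => exp (s • a) * q * exp (s • b)) t] at hftc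
  simp only [sub_self, sub_zero, zero_smul, exp_zero, one_mul, mul_one] at hftc
  rw [hftc]
  abel

end NormedAlgebra

section InnerProductSpace

variable {E : Type*} [NormedAddCommGroup E] [InnerProductSpace ℝ E] [CompleteSpace E]

theorem norm_exp_smul_le_of_inner_self_le {T : E →L[ℝ] E} {c : ℝ}
    (hT : ∀ x, ⟪T x, x⟫ ≤ c * ‖x‖ ^ 2) {s : ℝ} (hs : 0 ≤ s) :
    ‖exp (s • T)‖ ≤ Real.exp (s * c) := by
  refine ContinuousLinearMap.opNorm_le_bound _ (Real.exp_pos _).le fun x => ?_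
  have hu (σ : ℝ) : HasDerivAt (fun σ => exp (σ • T) x) (T (exp (σ • T) x)) σ := by
    simpa using (hasDerivAt_exp_smul_const' T σ).clm_apply (hasDerivAt_const σ x)
  -- Gronwall for `‖e^{σT} x‖²`, whose derivative `2⟪e^{σT} x, T e^{σT} x⟫` is `≤ 2c‖e^{σT} x‖²`
  have hgron := le_gronwallBound_of_liminf_deriv_right_le (ε := 0) (δ := ‖x‖ ^ 2) (K := 2 * c)
    (f := fun σ => ‖exp (σ • T) x‖ ^ 2) (a := 0) (b := s)
    (fun σ _ => (hu σ).norm_sq.continuousAt.continuousWithinAt)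
    (fun σ _ r hr => (hu σ).norm_sq.hasDerivWithinAt.liminf_right_slope_le hr)
    (by simp)
    (fun σ _ => by
      rw [real_inner_comm, add_zero, mul_assoc]
      exact mul_le_mul_of_nonneg_left (hT _) zero_le_two)
    s ⟨hs, le_rfl⟩
  rw [gronwallBound_ε0, sub_zero] at hgron
  refine (pow_le_pow_iff_left₀ (norm_nonneg _) (by positivity) two_ne_zero).1 ?_
  calc ‖exp (s • T) x‖ ^ 2 ≤ ‖x‖ ^ 2 * Real.exp (2 * c * s) := hgron
    _ = (Real.exp (s * c) * ‖x‖) ^ 2 := by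
      rw [mul_pow, ← Real.exp_nat_mul]; ring_nf

theorem inner_self_mul_mul_le_of_inner_self_le {p T : E →L[ℝ] E} (hp : IsSelfAdjoint p)
    (hp1 : ‖p‖ ≤ 1) {c : ℝ} (hc : 0 ≤ c) (hT : ∀ x, ⟪T x, x⟫ ≤ c * ‖x‖ ^ 2) (x : E) :
    ⟪(p * T * p) x, x⟫ ≤ c * ‖x‖ ^ 2 := by
  have hpx : ‖p x‖ ≤ ‖x‖ := (p.le_opNorm x).trans (mul_le_of_le_one_left (norm_nonneg x) hp1)
  calc ⟪(p * T * p) x, x⟫ = ⟪p (T (p x)), x⟫ := rfl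
    _ = ⟪T (p x), p x⟫ := by rw [← ContinuousLinearMap.adjoint_inner_right, hp.adjoint_eq]
    _ ≤ c * ‖p x‖ ^ 2 := hT (p x)
    _ ≤ c * ‖x‖ ^ 2 := by gcongr

end InnerProductSpace

section LogNorm

variable {n : ℕ}

theorem Matrix.l2_opNorm_transpose {ι κ : Type*} [Fintype ι] [Fintype κ] [DecidableEq ι]
    [DecidableEq κ] (M : Matrix ι κ ℝ) : ‖Mᵀ‖ = ‖M‖ := by
  rw [← conjTranspose_eq_transpose_of_trivial, l2_opNorm_conjTranspose]

theorem Matrix.l2_opNorm_le_one_of_transpose_mul_self_s7 {m : ℕ} {V : Matrix (Fin n) (Fin m) ℝ}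
    (hV : Vᵀ * V = 1) : ‖V‖ ≤ 1 := by
  have h1 : ‖(1 : Matrix (Fin m) (Fin m) ℝ)‖ ≤ 1 := by
    rw [← l2_opNorm_toEuclideanCLM, map_one]
    exact ContinuousLinearMap.norm_id_le
  have := l2_opNorm_conjTranspose_mul_self V
  rw [conjTranspose_eq_transpose_of_trivial, hV] at this
  nlinarith [norm_nonneg V]

theorem Matrix.l2_opNorm_mul_transpose_le_one {m : ℕ} {V : Matrix (Fin n) (Fin m) ℝ}
    (hV : Vᵀ * V = 1) : ‖V * Vᵀ‖ ≤ 1 := by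
  have hV1 := l2_opNorm_le_one_of_transpose_mul_self_s7 hV
  calc ‖V * Vᵀ‖ ≤ ‖V‖ * ‖Vᵀ‖ := l2_opNorm_mul _ _
    _ ≤ 1 := by rw [l2_opNorm_transpose]; nlinarith [norm_nonneg V]

theorem Matrix.l2_opNorm_exp (A : Matrix (Fin n) (Fin n) ℝ) :
    ‖exp A‖ = ‖exp (toEuclideanCLM (𝕜 := ℝ) A)‖ := by
  have hcont : Continuous (toEuclideanCLM (n := Fin n) (𝕜 := ℝ)) :=
    (AddMonoidHomClass.isometry_of_norm _ fun _ => rfl).continuous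
  rw [← l2_opNorm_toEuclideanCLM,
    map_exp_of_mem_ball (𝕂 := ℝ) _ hcont _ (by simp [expSeries_radius_eq_top])]

theorem bddAbove_re_fieldOfValues (A : Matrix (Fin n) (Fin n) ℝ) :
    BddAbove {r : ℝ | ∃ x : EuclideanSpace ℂ (Fin n), ‖x‖ = 1 ∧
      r = (dotProduct (star (x : Fin n → ℂ)) ((A.map Complex.ofReal).mulVec x)).re} := by
  refine ⟨‖A.map Complex.ofReal‖, ?_⟩
  rintro r ⟨x, hx, rfl⟩
  set B := A.map Complex.ofReal
  have hdot : star (x : Fin n → ℂ) ⬝ᵥ B *ᵥ x = inner ℂ x (toEuclideanCLM (𝕜 := ℂ) B x) := by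
    rw [EuclideanSpace.inner_eq_star_dotProduct, dotProduct_comm, ofLp_toEuclideanCLM]
  calc (star (x : Fin n → ℂ) ⬝ᵥ B *ᵥ x).re ≤ ‖inner ℂ x (toEuclideanCLM (𝕜 := ℂ) B x)‖ := by
        rw [hdot]; exact Complex.re_le_norm _
    _ ≤ ‖x‖ * (‖B‖ * ‖x‖) :=
        (norm_inner_le_norm _ _).trans
          (mul_le_mul_of_nonneg_left (ContinuousLinearMap.le_opNorm _ _) (norm_nonneg _))
    _ = ‖B‖ := by rw [hx]; ring

theorem inner_toEuclideanCLM_self_le_logNorm (A : Matrix (Fin n) (Fin n) ℝ)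
    (x : EuclideanSpace ℝ (Fin n)) :
    ⟪toEuclideanCLM (𝕜 := ℝ) A x, x⟫ ≤ logNorm A * ‖x‖ ^ 2 := by
  rcases eq_or_ne x 0 with rfl | hx
  · simp
  have hx' : 0 < ‖x‖ := norm_pos_iff.2 hx
  set u := ‖x‖⁻¹ • x
  have hu : ‖u‖ = 1 := by simp [u, norm_smul, hx'.ne']
  have hmem : ⟪toEuclideanCLM (𝕜 := ℝ) A u, u⟫ ≤ logNorm A := by
    refine le_csSup (bddAbove_re_fieldOfValues A) ⟨WithLp.toLp 2 fun i => (u i : ℂ), ?_, ?_⟩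
    · rw [← hu, EuclideanSpace.norm_eq, EuclideanSpace.norm_eq]
      simp
    · rw [real_inner_comm, inner_toEuclideanCLM]
      simp [dotProduct, mulVec]
  have hxu : x = ‖x‖ • u := by simp [u, smul_smul, hx'.ne']
  calc ⟪toEuclideanCLM (𝕜 := ℝ) A x, x⟫ = ‖x‖ ^ 2 * ⟪toEuclideanCLM (𝕜 := ℝ) A u, u⟫ := by
        conv_lhs => rw [hxu]
        simp only [map_smul, inner_smul_left, inner_smul_right, conj_trivial]
        ring
    _ ≤ ‖x‖ ^ 2 * logNorm A := by gcongr
    _ = logNorm A * ‖x‖ ^ 2 := mul_comm _ _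

theorem Matrix.norm_exp_smul_le_logNorm (A : Matrix (Fin n) (Fin n) ℝ) {s : ℝ} (hs : 0 ≤ s) :
    ‖exp (s • A)‖ ≤ Real.exp (s * logNorm A) := by
  rw [l2_opNorm_exp, map_smul]
  exact norm_exp_smul_le_of_inner_self_le (inner_toEuclideanCLM_self_le_logNorm A) hs

theorem Matrix.norm_exp_smul_compress_le {m : ℕ} (A : Matrix (Fin n) (Fin n) ℝ)
    {V : Matrix (Fin n) (Fin m) ℝ} (hV : Vᵀ * V = 1) {s : ℝ} (hs : 0 ≤ s) :
    ‖exp (s • (V * Vᵀ * A * (V * Vᵀ)))‖ ≤ Real.exp (s * max 0 (logNorm A)) := by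
  have hP : (V * Vᵀ).IsHermitian := by
    simpa only [conjTranspose_eq_transpose_of_trivial] using isHermitian_mul_conjTranspose_self V
  rw [l2_opNorm_exp, map_smul, map_mul, map_mul]
  refine norm_exp_smul_le_of_inner_self_le
    (inner_self_mul_mul_le_of_inner_self_le
      (hP.isSelfAdjoint.map (toEuclideanCLM (n := Fin n) (𝕜 := ℝ)))
      (l2_opNorm_mul_transpose_le_one hV) (le_max_left _ _) fun x => ?_) hs
  exact (inner_toEuclideanCLM_self_le_logNorm A x).trans
    (mul_le_mul_of_nonneg_right (le_max_right _ _) (sq_nonneg _))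

end LogNorm

section Krylov

theorem Matrix.compress_pow_mul {R : Type*} [Semiring R] {n ι : Type*} [Fintype n]
    [DecidableEq n] {P A : Matrix n n R} {W : Matrix n ι R} {k : ℕ}
    (hW : ∀ i < k, P * (A ^ i * W) = A ^ i * W) :
    ∀ i < k, (P * A * P) ^ i * (P * W) = A ^ i * W
  | 0, h => by simpa using hW 0 h
  | i + 1, h => by
    rw [pow_succ', Matrix.mul_assoc, compress_pow_mul hW i (by omega), Matrix.mul_assoc,
      Matrix.mul_assoc, hW i (by omega), ← Matrix.mul_assoc A, ← pow_succ', hW (i + 1) h]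

variable {n : ℕ}

theorem Matrix.exp_smul_mul_sub_exp_smul_compress_mul {ι : Type*}
    {P A : Matrix (Fin n) (Fin n) ℝ} {W : Matrix (Fin n) ι ℝ} {k : ℕ}
    (hW : ∀ i < k, P * (A ^ i * W) = A ^ i * W) (s : ℝ) :
    exp (s • A) * W - exp (s • (P * A * P)) * (P * W) =
      expTaylorRemainder A k s * W - expTaylorRemainder (P * A * P) k s * (P * W) := by
  have hpoly : (∑ i ∈ range k, (s ^ i / i !) • (P * A * P) ^ i) * (P * W) =
      (∑ i ∈ range k, (s ^ i / i !) • A ^ i) * W := by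
    simp only [Matrix.sum_mul, Matrix.smul_mul]
    exact sum_congr rfl fun i hi => by rw [compress_pow_mul hW i (mem_range.1 hi)]
  rw [expTaylorRemainder, expTaylorRemainder, Matrix.sub_mul, Matrix.sub_mul, hpoly]
  abel

variable {ι : Type*} [Fintype ι] [DecidableEq ι]

theorem Matrix.l2_opNorm_mul_transpose_self (W : Matrix (Fin n) ι ℝ) : ‖W * Wᵀ‖ = ‖W‖ ^ 2 := by
  have := l2_opNorm_conjTranspose_mul_self Wᵀ
  rwa [conjTranspose_eq_transpose_of_trivial, transpose_transpose, l2_opNorm_transpose, ← sq]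
    at this

theorem Matrix.norm_mul_transpose_sub_mul_transpose_le (a b : Matrix (Fin n) ι ℝ) :
    ‖a * aᵀ - b * bᵀ‖ ≤ ‖a - b‖ * (‖a‖ + ‖b‖) := by
  have h : a * aᵀ - b * bᵀ = (a - b) * aᵀ + b * (a - b)ᵀ := by
    rw [transpose_sub, Matrix.sub_mul, Matrix.mul_sub]; abel
  calc ‖a * aᵀ - b * bᵀ‖ ≤ ‖a - b‖ * ‖aᵀ‖ + ‖b‖ * ‖(a - b)ᵀ‖ :=
        h ▸ (norm_add_le _ _).trans (add_le_add (l2_opNorm_mul _ _) (l2_opNorm_mul _ _))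
    _ = ‖a - b‖ * (‖a‖ + ‖b‖) := by rw [l2_opNorm_transpose, l2_opNorm_transpose]; ring

theorem Matrix.norm_gram_exp_sub_gram_exp_compress_le {P A : Matrix (Fin n) (Fin n) ℝ}
    (hP : ‖P‖ ≤ 1) {W : Matrix (Fin n) ι ℝ} {k : ℕ} (hW : ∀ i < k, P * (A ^ i * W) = A ^ i * W)
    {M s : ℝ} (hs : 0 ≤ s) (hA : ∀ σ ∈ Icc 0 s, ‖exp (σ • A)‖ ≤ M)
    (hPAP : ∀ σ ∈ Icc 0 s, ‖exp (σ • (P * A * P))‖ ≤ M) :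
    ‖exp (s • A) * W * (exp (s • A) * W)ᵀ -
        exp (s • (P * A * P)) * (P * W) * (exp (s • (P * A * P)) * (P * W))ᵀ‖ ≤
      4 * M ^ 2 * ‖A‖ ^ k * (s ^ k / k !) * ‖W * Wᵀ‖ := by
  set Â := P * A * P
  have hs' : s ∈ Icc 0 s := ⟨hs, le_rfl⟩
  have hM : 0 ≤ M := (norm_nonneg _).trans (hA s hs')
  have hPW : ‖P * W‖ ≤ ‖W‖ :=
    (l2_opNorm_mul _ _).trans (mul_le_of_le_one_left (norm_nonneg _) hP)
  have hÂ : ‖Â‖ ≤ ‖A‖ :=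
    calc ‖Â‖ ≤ ‖P‖ * ‖A‖ * ‖P‖ :=
          (l2_opNorm_mul _ _).trans (mul_le_mul_of_nonneg_right (l2_opNorm_mul _ _) (norm_nonneg _))
      _ ≤ 1 * ‖A‖ * 1 := by gcongr
      _ = ‖A‖ := by ring
  set δ := M * ‖A‖ ^ k * (s ^ k / k !)
  have hδ : 0 ≤ δ := by positivity
  have hRA : ‖expTaylorRemainder A k s‖ ≤ δ := norm_expTaylorRemainder_le A hA k s hs'
  have hRÂ : ‖expTaylorRemainder Â k s‖ ≤ δ :=
    (norm_expTaylorRemainder_le Â hPAP k s hs').trans (by simp only [δ]; gcongr)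
  have ha : ‖exp (s • A) * W‖ ≤ M * ‖W‖ :=
    (l2_opNorm_mul _ _).trans (mul_le_mul_of_nonneg_right (hA s hs') (norm_nonneg _))
  have hb : ‖exp (s • Â) * (P * W)‖ ≤ M * ‖W‖ :=
    (l2_opNorm_mul _ _).trans (mul_le_mul (hPAP s hs') hPW (norm_nonneg _) hM)
  have hab : ‖exp (s • A) * W - exp (s • Â) * (P * W)‖ ≤ 2 * δ * ‖W‖ := by
    rw [exp_smul_mul_sub_exp_smul_compress_mul hW]
    calc _ ≤ ‖expTaylorRemainder A k s‖ * ‖W‖ + ‖expTaylorRemainder Â k s‖ * ‖P * W‖ :=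
          (norm_sub_le _ _).trans (add_le_add (l2_opNorm_mul _ _) (l2_opNorm_mul _ _))
      _ ≤ δ * ‖W‖ + δ * ‖W‖ := by gcongr
      _ = 2 * δ * ‖W‖ := by ring
  calc _ ≤ (2 * δ * ‖W‖) * (M * ‖W‖ + M * ‖W‖) :=
        (norm_mul_transpose_sub_mul_transpose_le _ _).trans
          (mul_le_mul hab (add_le_add ha hb) (by positivity) (by positivity))
    _ = 4 * M ^ 2 * ‖A‖ ^ k * (s ^ k / k !) * ‖W * Wᵀ‖ := by
      rw [l2_opNorm_mul_transpose_self]; ring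

end Krylov

section Lyapunov

variable {n : ℕ} {ι κ : Type*} [Fintype ι] [Fintype κ]

def lyapunovSolution (A : Matrix (Fin n) (Fin n) ℝ) (Z : Matrix (Fin n) ι ℝ)
    (C : Matrix (Fin n) κ ℝ) (t : ℝ) : Matrix (Fin n) (Fin n) ℝ :=
  exp (t • A) * Z * (exp (t • A) * Z)ᵀ + ∫ s in 0..t, exp (s • A) * C * (exp (s • A) * C)ᵀ

theorem eq_lyapunovSolution {A : Matrix (Fin n) (Fin n) ℝ} {Z : Matrix (Fin n) ι ℝ}
    {C : Matrix (Fin n) κ ℝ} {X : ℝ → Matrix (Fin n) (Fin n) ℝ} {t : ℝ} (ht : 0 ≤ t)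
    (hX : ∀ s ∈ Icc 0 t, HasDerivAt X (A * X s + X s * Aᵀ + C * Cᵀ) s) (hX0 : X 0 = Z * Zᵀ) :
    X t = lyapunovSolution A Z C t := by
  have hT (s : ℝ) : exp (s • Aᵀ) = (exp (s • A))ᵀ := by rw [← transpose_smul, exp_transpose]
  rw [sylvester_duhamel ht hX, hX0, lyapunovSolution]
  simp only [hT, transpose_mul, Matrix.mul_assoc]

theorem norm_lyapunovSolution_sub_compress_le [DecidableEq ι] [DecidableEq κ]
    {P A : Matrix (Fin n) (Fin n) ℝ} (hP : ‖P‖ ≤ 1) {Z : Matrix (Fin n) ι ℝ}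
    {C : Matrix (Fin n) κ ℝ} {k : ℕ}
    (hZ : ∀ i < k, P * (A ^ i * Z) = A ^ i * Z) (hC : ∀ i < k, P * (A ^ i * C) = A ^ i * C)
    {M t : ℝ} (ht : 0 ≤ t) (hA : ∀ σ ∈ Icc 0 t, ‖exp (σ • A)‖ ≤ M)
    (hPAP : ∀ σ ∈ Icc 0 t, ‖exp (σ • (P * A * P))‖ ≤ M) :
    ‖lyapunovSolution A Z C t - lyapunovSolution (P * A * P) (P * Z) (P * C) t‖ ≤
      4 * M ^ 2 * ‖A‖ ^ k * (t ^ k / k ! * ‖Z * Zᵀ‖ + t ^ (k + 1) / (k + 1)! * ‖C * Cᵀ‖) := by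
  set Â := P * A * P
  have hcont (B : Matrix (Fin n) (Fin n) ℝ) (W : Matrix (Fin n) κ ℝ) :
      Continuous fun s : ℝ => exp (s • B) * W * (exp (s • B) * W)ᵀ := by
    have := (differentiable_exp_smul_const ℝ B).continuous
    fun_prop
  have hsplit : lyapunovSolution A Z C t - lyapunovSolution Â (P * Z) (P * C) t =
      (exp (t • A) * Z * (exp (t • A) * Z)ᵀ - exp (t • Â) * (P * Z) * (exp (t • Â) * (P * Z))ᵀ) +
        ∫ s in 0..t, (exp (s • A) * C * (exp (s • A) * C)ᵀ -
          exp (s • Â) * (P * C) * (exp (s • Â) * (P * C))ᵀ) := by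
    rw [lyapunovSolution, lyapunovSolution, intervalIntegral.integral_sub
      ((hcont A C).intervalIntegrable _ _) ((hcont Â (P * C)).intervalIntegrable _ _)]
    abel
  have hrestrict {s : ℝ} (hs : s ≤ t) {σ : ℝ} (hσ : σ ∈ Icc 0 s) : σ ∈ Icc 0 t :=
    ⟨hσ.1, hσ.2.trans hs⟩
  set c := 4 * M ^ 2 * ‖A‖ ^ k
  have hintegral : ‖∫ s in 0..t, (exp (s • A) * C * (exp (s • A) * C)ᵀ -
      exp (s • Â) * (P * C) * (exp (s • Â) * (P * C))ᵀ)‖ ≤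
        c * (t ^ (k + 1) / (k + 1)!) * ‖C * Cᵀ‖ := by
    have hg : Continuous fun s : ℝ => c * (s ^ k / k !) * ‖C * Cᵀ‖ := by fun_prop
    have hval := intervalIntegral.integral_eq_sub_of_hasDerivAt
      (fun s _ => ((hasDerivAt_pow_succ_div_factorial k s).const_mul c).mul_const ‖C * Cᵀ‖)
      (hg.intervalIntegrable 0 t)
    rw [zero_pow k.succ_ne_zero, zero_div, mul_zero, zero_mul, sub_zero] at hval
    refine hval ▸ intervalIntegral.norm_integral_le_of_norm_le ht
      (MeasureTheory.ae_of_all _ fun s hs => ?_) (hg.intervalIntegrable 0 t)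
    exact norm_gram_exp_sub_gram_exp_compress_le hP hC hs.1.le
      (fun σ hσ => hA σ (hrestrict hs.2 hσ)) (fun σ hσ => hPAP σ (hrestrict hs.2 hσ))
  rw [hsplit]
  calc _ ≤ c * (t ^ k / k !) * ‖Z * Zᵀ‖ + c * (t ^ (k + 1) / (k + 1)!) * ‖C * Cᵀ‖ :=
        (norm_add_le _ _).trans
          (add_le_add (norm_gram_exp_sub_gram_exp_compress_le hP hZ ht hA hPAP) hintegral)
    _ = _ := by ring

end Lyapunov

section Galerkin

variable {n m : ℕ} {V : Matrix (Fin n) (Fin m) ℝ}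

theorem Matrix.mul_transpose_mul_eq_of_mem_colSpace {ι : Type*} [Fintype ι] [DecidableEq ι]
    (hV : Vᵀ * V = 1) {W : Matrix (Fin n) ι ℝ} (hW : ∀ j, Wᵀ j ∈ colSpace V) : V * Vᵀ * W = W := by
  refine ext_of_mulVec_single fun j => ?_
  obtain ⟨x, hx⟩ : Wᵀ j ∈ LinearMap.range V.mulVecLin := by rw [range_mulVecLin]; exact hW j
  rw [← mulVec_mulVec, mulVec_single_one]
  change (V * Vᵀ) *ᵥ Wᵀ j = Wᵀ j
  rw [← hx, mulVecLin_apply, mulVec_mulVec, Matrix.mul_assoc, hV, Matrix.mul_one]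

theorem Matrix.mul_transpose_mul_pow_mul_eq_of_colSpace_eq_blockKrylov {p q : ℕ}
    (hV : Vᵀ * V = 1) {A : Matrix (Fin n) (Fin n) ℝ} {Z : Matrix (Fin n) (Fin p) ℝ}
    {C : Matrix (Fin n) (Fin q) ℝ}
    {k : ℕ} (hspan : colSpace V = blockKrylov A (fromCols Z C) k) {i : ℕ} (hi : i < k) :
    V * Vᵀ * (A ^ i * Z) = A ^ i * Z ∧ V * Vᵀ * (A ^ i * C) = A ^ i * C := by
  have h := mul_transpose_mul_eq_of_mem_colSpace hV (W := A ^ i * fromCols Z C)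
    fun j => hspan ▸ Submodule.subset_span ⟨i, hi, j, rfl⟩
  rwa [mul_fromCols, mul_fromCols, fromCols_inj.eq_iff] at h

theorem hasDerivAt_lift_projected_lyapunov {q : ℕ} (hV : Vᵀ * V = 1)
    {A : Matrix (Fin n) (Fin n) ℝ} {C : Matrix (Fin n) (Fin q) ℝ} {Y : ℝ → Matrix (Fin m) (Fin m) ℝ}
    {s : ℝ} (hY : HasDerivAt Y
      ((Vᵀ * A * V) * Y s + Y s * (Vᵀ * A * V)ᵀ + (Vᵀ * C) * (Vᵀ * C)ᵀ) s) :
    HasDerivAt (fun s => V * Y s * Vᵀ)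
      (V * Vᵀ * A * (V * Vᵀ) * (V * Y s * Vᵀ) + V * Y s * Vᵀ * (V * Vᵀ * A * (V * Vᵀ))ᵀ +
        V * Vᵀ * C * (V * Vᵀ * C)ᵀ) s := by
  let L : Matrix (Fin m) (Fin m) ℝ →ₗ[ℝ] Matrix (Fin n) (Fin n) ℝ :=
    { toFun := fun M => V * M * Vᵀ
      map_add' := fun M N => by rw [Matrix.mul_add, Matrix.add_mul]
      map_smul' := fun r M => by rw [Matrix.mul_smul, Matrix.smul_mul]; rfl }
  have hV' {l : Type} (M : Matrix (Fin m) l ℝ) : Vᵀ * (V * M) = M := by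
    rw [← Matrix.mul_assoc, hV, Matrix.one_mul]
  refine (L.toContinuousLinearMap.hasFDerivAt.comp_hasDerivAt s hY).congr_deriv ?_
  simp only [L, LinearMap.coe_toContinuousLinearMap', LinearMap.coe_mk, AddHom.coe_mk,
    transpose_mul, transpose_transpose, Matrix.mul_add, Matrix.add_mul, Matrix.mul_assoc, hV']

end Galerkin

theorem krylov_lyapunov_error_general {n p q m : ℕ} (T : ℝ)
    (A : Matrix (Fin n) (Fin n) ℝ)
    (Z : Matrix (Fin n) (Fin p) ℝ) (C : Matrix (Fin n) (Fin q) ℝ) (k : ℕ)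
    (V : Matrix (Fin n) (Fin m) ℝ) (hV : Vᵀ * V = 1)
    (hspan : colSpace V = blockKrylov A (Matrix.fromCols Z C) k)
    (X : ℝ → Matrix (Fin n) (Fin n) ℝ) (Y : ℝ → Matrix (Fin m) (Fin m) ℝ)
    (hX : ∀ t ∈ Set.Icc (0:ℝ) T,
      HasDerivAt X (A * X t + X t * Aᵀ + C * Cᵀ) t)
    (hX0 : X 0 = Z * Zᵀ)
    (hY : ∀ t ∈ Set.Icc (0:ℝ) T,
      HasDerivAt Y ((Vᵀ * A * V) * Y t + Y t * (Vᵀ * A * V)ᵀ + (Vᵀ * C) * (Vᵀ * C)ᵀ) t)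
    (hY0 : Y 0 = (Vᵀ * Z) * (Vᵀ * Z)ᵀ) :
    ∀ t ∈ Set.Icc (0:ℝ) T,
      ‖X t - V * Y t * Vᵀ‖ ≤
        4 * max 1 (Real.exp (2 * t * logNorm A)) * ‖A‖ ^ k *
          (t ^ k / (Nat.factorial k : ℝ) * ‖Z * Zᵀ‖
            + t ^ (k + 1) / (Nat.factorial (k + 1) : ℝ) * ‖C * Cᵀ‖) := by
  intro t ht
  have hsub : Icc 0 t ⊆ Icc 0 T := Icc_subset_Icc_right ht.2
  rw [eq_lyapunovSolution ht.1 (fun s hs => hX s (hsub hs)) hX0,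
    eq_lyapunovSolution (X := fun s => V * Y s * Vᵀ) (Z := V * Vᵀ * Z) ht.1
      (fun s hs => hasDerivAt_lift_projected_lyapunov hV (hY s (hsub hs)))
      (by simp only [hY0, transpose_mul, transpose_transpose, Matrix.mul_assoc])]
  have hexp : Real.exp (t * max 0 (logNorm A)) ^ 2 = max 1 (Real.exp (2 * t * logNorm A)) := by
    rw [← Real.exp_nat_mul, Nat.cast_ofNat, ← mul_assoc,
      mul_max_of_nonneg _ _ (by linarith [ht.1] : (0 : ℝ) ≤ 2 * t), mul_zero,
      Monotone.map_max Real.exp_monotone, Real.exp_zero]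
  set c := max 0 (logNorm A)
  have hmono {σ : ℝ} (hσ : σ ∈ Icc 0 t) : Real.exp (σ * c) ≤ Real.exp (t * c) :=
    Real.exp_le_exp.2 (mul_le_mul_of_nonneg_right hσ.2 (le_max_left _ _))
  have hA (σ : ℝ) (hσ : σ ∈ Icc 0 t) : ‖exp (σ • A)‖ ≤ Real.exp (t * c) :=
    (norm_exp_smul_le_logNorm A hσ.1).trans <|
      (Real.exp_le_exp.2 <| mul_le_mul_of_nonneg_left (le_max_right _ _) hσ.1).trans (hmono hσ)
  have hPAP (σ : ℝ) (hσ : σ ∈ Icc 0 t) :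
      ‖exp (σ • (V * Vᵀ * A * (V * Vᵀ)))‖ ≤ Real.exp (t * c) :=
    (norm_exp_smul_compress_le A hV hσ.1).trans (hmono hσ)
  have hfix {i : ℕ} (hi : i < k) :=
    mul_transpose_mul_pow_mul_eq_of_colSpace_eq_blockKrylov hV hspan hi
  rw [← hexp]
  exact norm_lyapunovSolution_sub_compress_le (l2_opNorm_mul_transpose_le_one hV)
    (fun i hi => (hfix hi).1) (fun i hi => (hfix hi).2) ht.1 hA hPAP

/-- A priori error bound for the Krylov approximation of the differential
Lyapunov equation, Theorem 4.1. -/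
theorem krylov_lyapunov_error {n p q m : ℕ} (T : ℝ) (hT : 0 ≤ T)
    (A : Matrix (Fin n) (Fin n) ℝ)
    (Z : Matrix (Fin n) (Fin p) ℝ) (C : Matrix (Fin n) (Fin q) ℝ) (k : ℕ)
    (V : Matrix (Fin n) (Fin m) ℝ) (hV : Vᵀ * V = 1)
    (hspan : colSpace V = blockKrylov A (Matrix.fromCols Z C) k)
    (X : ℝ → Matrix (Fin n) (Fin n) ℝ) (Y : ℝ → Matrix (Fin m) (Fin m) ℝ)
    (hX : ∀ t ∈ Set.Icc (0:ℝ) T,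
      HasDerivAt X (A * X t + X t * Aᵀ + C * Cᵀ) t)
    (hX0 : X 0 = Z * Zᵀ)
    (hY : ∀ t ∈ Set.Icc (0:ℝ) T,
      HasDerivAt Y ((Vᵀ * A * V) * Y t + Y t * (Vᵀ * A * V)ᵀ + (Vᵀ * C) * (Vᵀ * C)ᵀ) t)
    (hY0 : Y 0 = (Vᵀ * Z) * (Vᵀ * Z)ᵀ) :
    ∀ t ∈ Set.Icc (0:ℝ) T,
      ‖X t - V * Y t * Vᵀ‖ ≤
        4 * max 1 (Real.exp (2 * t * logNorm A)) * ‖A‖ ^ k *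
          (t ^ k / (Nat.factorial k : ℝ) * ‖Z * Zᵀ‖
            + t ^ (k + 1) / (Nat.factorial (k + 1) : ℝ) * ‖C * Cᵀ‖) :=
  krylov_lyapunov_error_general T A Z C k V hV hspan X Y hX hX0 hY hY0
end
end

section
/- Let A, S ∈ ℝ^{n×n} with S symmetric positive semidefinite, Z ∈ ℝ^{n×p}, C ∈ ℝ^{n×q}, and write X₀ = Z Zᵀ, Q = C Cᵀ. Let V_k be a matrix with orthonormal columns, set H_k = V_kᵀ A V_k, S_k = V_kᵀ S V_k, C_k = V_kᵀ C, Z_k = V_kᵀ Z, let Y_k solve the projected differential Riccati equation Ẏ_k(t) = H_k Y_k(t) + Y_k(t) H_kᵀ + C_k C_kᵀ − Y_k(t) S_k Y_k(t), Y_k(0) = Z_k Z_kᵀ, and set X_k(t) = V_k Y_k(t) V_kᵀ. Then X_k(t) is symmetric positive semidefinite and ‖X_k(t)‖ ≤ e^{2tμ(A)} ‖X₀‖ + t φ₁(2tμ(A)) ‖Q‖ for all t in the existence interval of Y_k. -/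
open Matrix
open scoped Matrix.Norms.L2Operator

noncomputable section

/-! The transpose of a solution solves the same Riccati equation, whose right-hand side is
locally Lipschitz, so `Y t` stays symmetric. Positivity and the norm bound are then barrier
arguments for an extreme eigenvalue. If `λ_min (Y t) + ε e^{K t}` vanished for the first time at
`t₀`, then for a unit eigenvector `v` of `Y t₀` the function `vᵀ Y(t) v + ε e^{K t}` would be
positive before `t₀` and zero at `t₀`, so its derivative at `t₀` would be `≤ 0`; on an eigenvector
the Riccati right-hand side is `2λ vᵀHv + vᵀQv - λ² vᵀSv`, which makes that derivative positive
once `K` is large. Letting `ε → 0` gives `λ_min (Y t) ≥ 0`. Running the same argument for `-Y`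
against the solution `B` of `B' = 2μ(A) B + ‖Q‖` gives `λ_max (Y t) ≤ B t`, hence `‖Y t‖ ≤ B t`.
Finally `vᵀ (Vᵀ A V) v ≤ μ(A)` for unit `v`, and conjugation by `V` or `Vᵀ` does not increase
the spectral norm. -/

open Set

theorem HasDerivAt.nonpos_of_isMinOn_Ioc {φ : ℝ → ℝ} {d a t : ℝ} (hφ : HasDerivAt φ d t)
    (hat : a < t) (hmin : IsMinOn φ (Ioc a t) t) : d ≤ 0 := by
  refine le_of_tendsto (hasDerivAt_iff_tendsto_slope_left_right.mp hφ).1 ?_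
  filter_upwards [Ioo_mem_nhdsLT hat] with s hs
  rw [slope_def_field]
  exact div_nonpos_of_nonneg_of_nonpos (sub_nonneg.2 (hmin ⟨hs.1, hs.2.le⟩)) (sub_nonpos.2 hs.2.le)

theorem pos_on_Icc_of_barrier {g : ℝ → ℝ} {a b : ℝ} (hg : ContinuousOn g (Icc a b))
    (ha : 0 < g a)
    (hbarrier : ∀ t ∈ Ioc a b, g t = 0 → ∃ φ : ℝ → ℝ, ∃ d > 0,
      HasDerivAt φ d t ∧ φ t = 0 ∧ ∀ s ∈ Ioc a t, g s ≤ φ s) :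
    ∀ t ∈ Icc a b, 0 < g t := by
  by_contra! ⟨t₁, ht₁, hgt₁⟩
  set N := {s ∈ Icc a t₁ | g s ≤ 0}
  have hNbdd : BddBelow N := ⟨a, fun s hs => hs.1.1⟩
  have hNclosed : IsClosed N :=
    (hg.mono (Icc_subset_Icc_right ht₁.2)).preimage_isClosed_of_isClosed isClosed_Icc isClosed_Iic
  have ht₀ : sInf N ∈ N := hNclosed.csInf_mem ⟨t₁, ⟨ht₁.1, le_rfl⟩, hgt₁⟩ hNbdd
  set t₀ := sInf N
  have hgt₀ : g t₀ = 0 := by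
    obtain ⟨c, hc, hgc⟩ := intermediate_value_Icc' ht₀.1.1
      (hg.mono (Icc_subset_Icc_right (ht₀.1.2.trans ht₁.2))) ⟨ht₀.2, ha.le⟩
    have hct₀ : t₀ ≤ c := csInf_le hNbdd ⟨⟨hc.1, hc.2.trans ht₀.1.2⟩, hgc.le⟩
    rwa [le_antisymm hc.2 hct₀] at hgc
  have hat₀ : a < t₀ := ht₀.1.1.lt_of_ne (by rintro h; rw [← h] at hgt₀; linarith)
  have hnonneg : ∀ s ∈ Ioc a t₀, 0 ≤ g s := fun s hs => by
    by_contra! hs'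
    exact (csInf_le hNbdd ⟨⟨hs.1.le, hs.2.trans ht₀.1.2⟩, hs'.le⟩).not_gt
      (hs.2.lt_of_ne (by rintro rfl; linarith))
  obtain ⟨φ, d, hd, hφ, hφt₀, hgφ⟩ := hbarrier t₀ ⟨hat₀, ht₀.1.2.trans ht₁.2⟩ hgt₀
  refine (hφ.nonpos_of_isMinOn_Ioc hat₀ fun s hs => ?_).not_gt hd
  show φ t₀ ≤ φ s
  rw [hφt₀]
  exact (hnonneg s hs).trans (hgφ s hs)

theorem nonneg_of_forall_pos_add_mul_pos {a c : ℝ} (hc : 0 < c) (h : ∀ ε > 0, 0 < a + ε * c) :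
    0 ≤ a := by
  by_contra! ha
  have := h (-a / c) (div_pos (neg_pos.2 ha) hc)
  rw [div_mul_cancel₀ _ hc.ne'] at this
  linarith

theorem hasDerivAt_mul_exp_mul (ε K s : ℝ) :
    HasDerivAt (fun s => ε * Real.exp (K * s)) (K * (ε * Real.exp (K * s))) s := by
  simpa [mul_comm, mul_left_comm] using ((hasDerivAt_id s).const_mul K).exp.const_mul ε

theorem phi1_mul_eq_exp_sub_one (z : ℝ) : phi1 z * z = Real.exp z - 1 := by
  have hs := Real.summable_pow_div_factorial z
  rw [phi1, ← tsum_mul_right, Real.exp_eq_exp_ℝ, NormedSpace.exp_eq_tsum_div]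
  beta_reduce
  rw [hs.tsum_eq_zero_add]
  simp [pow_succ, div_mul_eq_mul_div]

theorem phi1_zero : phi1 0 = 1 := by
  rw [phi1, tsum_eq_single 0 fun k hk => by rw [zero_pow hk, zero_div]]
  simp

theorem phi1_nonneg (z : ℝ) : 0 ≤ phi1 z := by
  rcases eq_or_ne z 0 with rfl | hz
  · rw [phi1_zero]; exact zero_le_one
  have hsign : 0 ≤ (Real.exp z - 1) * z := by
    rcases le_total 0 z with h | h
    · exact mul_nonneg (sub_nonneg.2 (Real.one_le_exp h)) h
    · exact mul_nonneg_of_nonpos_of_nonpos (sub_nonpos.2 (Real.exp_le_one_iff.2 h)) h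
  rw [← phi1_mul_eq_exp_sub_one, mul_assoc] at hsign
  exact nonneg_of_mul_nonneg_left hsign (mul_self_pos.2 hz)

theorem gronwallBound_eq_exp_add_phi1 (δ K ε t : ℝ) :
    gronwallBound δ K ε t = Real.exp (K * t) * δ + t * phi1 (K * t) * ε := by
  rcases eq_or_ne K 0 with rfl | hK
  · simp only [gronwallBound_K0, zero_mul, Real.exp_zero, one_mul, phi1_zero, mul_one,
      add_right_inj]
    ring
  rcases eq_or_ne t 0 with rfl | ht
  · simp [gronwallBound_x0]
  rw [gronwallBound_of_K_ne_0 hK]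
  beta_reduce
  rw [← phi1_mul_eq_exp_sub_one]
  field_simp

theorem gronwallBound_nonneg {δ K ε t : ℝ} (hδ : 0 ≤ δ) (hε : 0 ≤ ε) (ht : 0 ≤ t) :
    0 ≤ gronwallBound δ K ε t := by
  rw [gronwallBound_eq_exp_add_phi1]
  exact add_nonneg (mul_nonneg (Real.exp_pos _).le hδ) (mul_nonneg (mul_nonneg ht (phi1_nonneg _)) hε)

theorem EuclideanSpace.ofLp_dotProduct_self {n : Type*} [Fintype n] (v : EuclideanSpace ℝ n) :
    v.ofLp ⬝ᵥ v.ofLp = ‖v‖ ^ 2 := by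
  rw [← real_inner_self_eq_norm_sq, EuclideanSpace.inner_eq_star_dotProduct]
  simp

namespace Matrix

section L2OpNorm

variable {m n : Type*} [Fintype m] [Fintype n] [DecidableEq n]

theorem norm_star_dotProduct_mulVec_le {𝕜 : Type*} [RCLike 𝕜] (M : Matrix m n 𝕜)
    (v : EuclideanSpace 𝕜 m) (w : EuclideanSpace 𝕜 n) :
    ‖star v.ofLp ⬝ᵥ M *ᵥ w.ofLp‖ ≤ ‖M‖ * ‖v‖ * ‖w‖ :=
  calc ‖star v.ofLp ⬝ᵥ M *ᵥ w.ofLp‖ = ‖inner 𝕜 v (WithLp.toLp 2 (M *ᵥ w.ofLp))‖ := by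
        rw [EuclideanSpace.inner_eq_star_dotProduct, dotProduct_comm]
    _ ≤ ‖v‖ * ‖WithLp.toLp 2 (M *ᵥ w.ofLp)‖ := norm_inner_le_norm _ _
    _ ≤ ‖v‖ * (‖M‖ * ‖w‖) := by gcongr; exact l2_opNorm_mulVec M w
    _ = ‖M‖ * ‖v‖ * ‖w‖ := by ring

theorem abs_dotProduct_mulVec_le (M : Matrix m n ℝ) (v : EuclideanSpace ℝ m)
    (w : EuclideanSpace ℝ n) : |v.ofLp ⬝ᵥ M *ᵥ w.ofLp| ≤ ‖M‖ * ‖v‖ * ‖w‖ := by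
  simpa using norm_star_dotProduct_mulVec_le M v w

theorem l2_opNorm_transpose_s9 [DecidableEq m] (A : Matrix m n ℝ) : ‖Aᵀ‖ = ‖A‖ := by
  rw [← conjTranspose_eq_transpose_of_trivial, l2_opNorm_conjTranspose]

theorem l2_opNorm_mul_transpose_self_s9 [DecidableEq m] (B : Matrix m n ℝ) :
    ‖B * Bᵀ‖ = ‖B‖ * ‖B‖ := by
  simpa [conjTranspose_eq_transpose_of_trivial, l2_opNorm_transpose_s9] using
    l2_opNorm_conjTranspose_mul_self Bᵀ

theorem l2_opNorm_le_one_of_transpose_mul_self_eq_one [DecidableEq m] {V : Matrix m n ℝ}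
    (hV : Vᵀ * V = 1) : ‖V‖ ≤ 1 := by
  have hV' := l2_opNorm_mul_transpose_self_s9 Vᵀ
  rw [transpose_transpose, hV, l2_opNorm_transpose_s9] at hV'
  -- `‖1‖ = ‖1‖ * ‖1‖`, so `‖1‖` is `0` or `1`
  have hone := l2_opNorm_mul_transpose_self_s9 (1 : Matrix n n ℝ)
  rw [transpose_one, one_mul] at hone
  have hone_le : ‖(1 : Matrix n n ℝ)‖ ≤ 1 := by nlinarith [norm_nonneg (1 : Matrix n n ℝ)]
  nlinarith [norm_nonneg V]

theorem l2_opNorm_mul_mul_transpose_le [DecidableEq m] {V : Matrix m n ℝ} (hV : ‖V‖ ≤ 1)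
    (Y : Matrix n n ℝ) : ‖V * Y * Vᵀ‖ ≤ ‖Y‖ :=
  calc ‖V * Y * Vᵀ‖ ≤ ‖V‖ * ‖Y‖ * ‖V‖ := by
        grw [l2_opNorm_mul, l2_opNorm_mul, l2_opNorm_transpose_s9]
    _ ≤ 1 * ‖Y‖ * 1 := by gcongr
    _ = ‖Y‖ := by ring

open scoped MatrixOrder in
theorem l2_opNorm_le_of_posSemidef {M : Matrix n n ℝ} (hM : M.PosSemidef) {c : ℝ} (hc : 0 ≤ c)
    (h : ∀ x : EuclideanSpace ℝ n, x.ofLp ⬝ᵥ M *ᵥ x.ofLp ≤ c * ‖x‖ ^ 2) : ‖M‖ ≤ c := by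
  obtain ⟨B, rfl⟩ := CStarAlgebra.nonneg_iff_eq_star_mul_self.mp hM.nonneg
  have hB : ‖B‖ ≤ √c := by
    rw [l2_opNorm_def]
    refine ContinuousLinearMap.opNorm_le_bound _ (Real.sqrt_nonneg c) fun x => ?_
    have hx : ‖WithLp.toLp 2 (B *ᵥ x.ofLp)‖ ^ 2 ≤ c * ‖x‖ ^ 2 := by
      rw [← EuclideanSpace.ofLp_dotProduct_self]
      convert h x using 1
      simp [star_eq_conjTranspose, conjTranspose_eq_transpose_of_trivial, ← mulVec_mulVec,
        dotProduct_mulVec, vecMul_transpose]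
    calc _ ≤ √(c * ‖x‖ ^ 2) := Real.le_sqrt_of_sq_le hx
      _ = √c * ‖x‖ := by rw [Real.sqrt_mul hc, Real.sqrt_sq (norm_nonneg x)]
  rw [star_eq_conjTranspose, l2_opNorm_conjTranspose_mul_self]
  calc ‖B‖ * ‖B‖ ≤ √c * √c := by gcongr
    _ = c := Real.mul_self_sqrt hc

end L2OpNorm

variable {m n : Type*} [Fintype m] [Fintype n]

theorem posSemidef_mul_transpose_self (B : Matrix m n ℝ) : (B * Bᵀ).PosSemidef := by
  simpa [conjTranspose_eq_transpose_of_trivial] using posSemidef_self_mul_conjTranspose B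

theorem PosSemidef.mul_mul_transpose_same {M : Matrix n n ℝ} (hM : M.PosSemidef)
    (B : Matrix m n ℝ) : (B * M * Bᵀ).PosSemidef := by
  simpa [conjTranspose_eq_transpose_of_trivial] using hM.mul_mul_conjTranspose_same B

end Matrix

theorem le_logNorm {n : ℕ} (A : Matrix (Fin n) (Fin n) ℝ) {w : EuclideanSpace ℝ (Fin n)}
    (hw : ‖w‖ = 1) : w.ofLp ⬝ᵥ A *ᵥ w.ofLp ≤ logNorm A := by
  set x : EuclideanSpace ℂ (Fin n) := WithLp.toLp 2 fun i => (w.ofLp i : ℂ)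
  have hx : ‖x‖ = 1 := by
    rw [← hw, EuclideanSpace.norm_eq, EuclideanSpace.norm_eq]
    simp [x]
  refine le_csSup ⟨‖A.map Complex.ofReal‖, ?_⟩ ⟨x, hx, ?_⟩
  · rintro _ ⟨y, hy, rfl⟩
    simpa [hy] using (Complex.re_le_norm _).trans (norm_star_dotProduct_mulVec_le _ y y)
  · simp [x, dotProduct, mulVec]

theorem dotProduct_transpose_mul_mul_mulVec_le_logNorm {n m : ℕ} (A : Matrix (Fin n) (Fin n) ℝ)
    {V : Matrix (Fin n) (Fin m) ℝ} (hV : Vᵀ * V = 1) {v : EuclideanSpace ℝ (Fin m)}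
    (hv : ‖v‖ = 1) : v.ofLp ⬝ᵥ (Vᵀ * A * V) *ᵥ v.ofLp ≤ logNorm A := by
  set w : EuclideanSpace ℝ (Fin n) := WithLp.toLp 2 (V *ᵥ v.ofLp)
  have hw : ‖w‖ = 1 := by
    rw [← pow_eq_one_iff_of_nonneg (norm_nonneg w) two_ne_zero, ← one_pow 2, ← hv,
      ← EuclideanSpace.ofLp_dotProduct_self, ← EuclideanSpace.ofLp_dotProduct_self]
    simp only [w, dotProduct_mulVec, ← mulVec_transpose, mulVec_mulVec, hV, one_mulVec]
  convert le_logNorm A hw using 1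
  simp only [w, ← mulVec_mulVec, dotProduct_mulVec _ Vᵀ, vecMul_transpose]

namespace Matrix

section Rayleigh

variable {n : Type*} [Fintype n] [DecidableEq n]

/-- For symmetric `M` this is the smallest eigenvalue of `M`. -/
def infRayleigh (M : Matrix n n ℝ) : ℝ :=
  ⨅ x : {x : EuclideanSpace ℝ n // x ≠ 0}, (toEuclideanCLM (𝕜 := ℝ) M).rayleighQuotient x

theorem reApplyInnerSelf_toEuclideanCLM (M : Matrix n n ℝ) (x : EuclideanSpace ℝ n) :
    (toEuclideanCLM (𝕜 := ℝ) M).reApplyInnerSelf x = x.ofLp ⬝ᵥ M *ᵥ x.ofLp := by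
  simp [ContinuousLinearMap.reApplyInnerSelf, EuclideanSpace.inner_eq_star_dotProduct]

theorem infRayleigh_mul_norm_sq_le (M : Matrix n n ℝ) (x : EuclideanSpace ℝ n) :
    infRayleigh M * ‖x‖ ^ 2 ≤ x.ofLp ⬝ᵥ M *ᵥ x.ofLp := by
  rcases eq_or_ne x 0 with rfl | hx
  · simp
  have hbdd : BddBelow (range fun y : {y : EuclideanSpace ℝ n // y ≠ 0} =>
      (toEuclideanCLM (𝕜 := ℝ) M).rayleighQuotient y) := by
    refine ⟨-‖toEuclideanCLM (𝕜 := ℝ) M‖, ?_⟩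
    rintro _ ⟨y, rfl⟩
    exact neg_le_of_abs_le (ContinuousLinearMap.rayleighQuotient_le_norm _ _)
  have h := ciInf_le hbdd ⟨x, hx⟩
  rw [← reApplyInnerSelf_toEuclideanCLM]
  rwa [le_div_iff₀ (by positivity)] at h

theorem le_infRayleigh [Nonempty n] {M : Matrix n n ℝ} {c : ℝ}
    (h : ∀ x : EuclideanSpace ℝ n, c * ‖x‖ ^ 2 ≤ x.ofLp ⬝ᵥ M *ᵥ x.ofLp) : c ≤ infRayleigh M := by
  have : Nonempty {x : EuclideanSpace ℝ n // x ≠ 0} := nonempty_subtype.mpr (exists_ne 0)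
  refine le_ciInf fun x => ?_
  rw [le_div_iff₀ (pow_pos (norm_pos_iff.mpr x.2) 2), reApplyInnerSelf_toEuclideanCLM]
  exact h x

theorem PosSemidef.infRayleigh_nonneg [Nonempty n] {M : Matrix n n ℝ} (hM : M.PosSemidef) :
    0 ≤ infRayleigh M :=
  le_infRayleigh fun x => by simpa using hM.dotProduct_mulVec_nonneg x.ofLp

theorem neg_norm_le_infRayleigh [Nonempty n] (M : Matrix n n ℝ) : -‖M‖ ≤ infRayleigh M :=
  le_infRayleigh fun x => by
    have := neg_le_of_abs_le (abs_dotProduct_mulVec_le M x x)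
    linarith

theorem lipschitzWith_infRayleigh [Nonempty n] :
    LipschitzWith 1 (infRayleigh : Matrix n n ℝ → ℝ) := by
  have key : ∀ M N : Matrix n n ℝ, infRayleigh N - ‖M - N‖ ≤ infRayleigh M := fun M N =>
    le_infRayleigh fun x => by
      have h1 := infRayleigh_mul_norm_sq_le N x
      have h2 := neg_le_of_abs_le (abs_dotProduct_mulVec_le (M - N) x x)
      rw [sub_mulVec, dotProduct_sub] at h2
      nlinarith
  refine LipschitzWith.of_dist_le_mul fun M N => ?_
  rw [NNReal.coe_one, one_mul, Real.dist_eq, dist_eq_norm, abs_sub_le_iff]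
  exact ⟨by linarith [key N M, norm_sub_rev M N], by linarith [key M N]⟩

theorem IsHermitian.exists_unit_mulVec_eq_infRayleigh [Nonempty n] {M : Matrix n n ℝ}
    (hM : M.IsHermitian) :
    ∃ v : EuclideanSpace ℝ n, ‖v‖ = 1 ∧ M *ᵥ v.ofLp = infRayleigh M • v.ofLp := by
  obtain ⟨v, hv⟩ := (isSymmetric_toEuclideanLin_iff.mpr hM).hasEigenvalue_iInf_of_finiteDimensional
    |>.exists_hasEigenvector
  have hMv : M *ᵥ v.ofLp = infRayleigh M • v.ofLp := congrArg WithLp.ofLp hv.apply_eq_smul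
  refine ⟨‖v‖⁻¹ • v, norm_smul_inv_norm hv.2, ?_⟩
  simp only [WithLp.ofLp_smul, mulVec_smul, hMv, smul_comm (infRayleigh M)]

theorem posSemidef_of_infRayleigh_nonneg {M : Matrix n n ℝ} (hM : M.IsHermitian)
    (h : 0 ≤ infRayleigh M) : M.PosSemidef := by
  refine .of_dotProduct_mulVec_nonneg hM fun x => ?_
  simpa using (mul_nonneg h (sq_nonneg ‖WithLp.toLp 2 x‖)).trans
    (infRayleigh_mul_norm_sq_le M (WithLp.toLp 2 x))

theorem hasDerivAt_dotProduct_mulVec {Y : ℝ → Matrix n n ℝ} {D : Matrix n n ℝ} {t : ℝ}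
    (v w : n → ℝ) (h : HasDerivAt Y D t) :
    HasDerivAt (fun s => v ⬝ᵥ Y s *ᵥ w) (v ⬝ᵥ D *ᵥ w) t := by
  let L : Matrix n n ℝ →ₗ[ℝ] ℝ :=
    LinearMap.applyₗ w ∘ₗ LinearMap.applyₗ v ∘ₗ (toLinearMap₂' ℝ).toLinearMap
  simpa [L, toLinearMap₂'_apply', Function.comp_def] using
    (LinearMap.toContinuousLinearMap L).hasFDerivAt.comp_hasDerivAt t h

theorem pos_infRayleigh_add_of_barrier [Nonempty n] {Y D : ℝ → Matrix n n ℝ} {β β' : ℝ → ℝ}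
    {a b : ℝ} (hY : ∀ t ∈ Icc a b, HasDerivAt Y (D t) t)
    (hYsymm : ∀ t ∈ Icc a b, (Y t).IsHermitian) (hβ : ∀ t ∈ Icc a b, HasDerivAt β (β' t) t)
    (ha : 0 < infRayleigh (Y a) + β a)
    (hbarrier : ∀ t ∈ Ioc a b, ∀ v : EuclideanSpace ℝ n, ‖v‖ = 1 →
      Y t *ᵥ v.ofLp = -β t • v.ofLp → 0 < v.ofLp ⬝ᵥ D t *ᵥ v.ofLp + β' t) :
    ∀ t ∈ Icc a b, 0 < infRayleigh (Y t) + β t := by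
  have hcont : ContinuousOn (fun t => infRayleigh (Y t) + β t) (Icc a b) := fun t ht =>
    ((lipschitzWith_infRayleigh.continuous.continuousAt.comp (hY t ht).continuousAt).add
      (hβ t ht).continuousAt).continuousWithinAt
  refine pos_on_Icc_of_barrier hcont ha fun t ht hzero => ?_
  have htIcc : t ∈ Icc a b := Ioc_subset_Icc_self ht
  obtain ⟨v, hv, hYv⟩ := (hYsymm t htIcc).exists_unit_mulVec_eq_infRayleigh
  rw [eq_neg_of_add_eq_zero_left hzero] at hYv
  refine ⟨fun s => v.ofLp ⬝ᵥ Y s *ᵥ v.ofLp + β s, _, hbarrier t ht v hv hYv,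
    (hasDerivAt_dotProduct_mulVec v.ofLp v.ofLp (hY t htIcc)).add (hβ t htIcc), ?_,
    fun s _ => by simpa [hv] using infRayleigh_mul_norm_sq_le (Y s) v⟩
  simp [hYv, EuclideanSpace.ofLp_dotProduct_self, hv]

end Rayleigh

section Riccati

variable {n : Type*} [Fintype n]

def riccati (H Q S X : Matrix n n ℝ) : Matrix n n ℝ := H * X + X * Hᵀ + Q - X * S * X

variable {H Q S : Matrix n n ℝ} {Y : ℝ → Matrix n n ℝ} {T : ℝ}

theorem riccati_transpose (hQ : Q.IsSymm) (hS : S.IsSymm) (X : Matrix n n ℝ) :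
    (riccati H Q S X)ᵀ = riccati H Q S Xᵀ := by
  simp only [riccati, transpose_sub, transpose_add, transpose_mul, transpose_transpose, hQ.eq,
    hS.eq, Matrix.mul_assoc]
  abel

theorem dotProduct_riccati_mulVec_of_mulVec_eq_smul {X : Matrix n n ℝ} (hX : X.IsSymm)
    {v : n → ℝ} {r : ℝ} (hXv : X *ᵥ v = r • v) :
    v ⬝ᵥ riccati H Q S X *ᵥ v =
      2 * r * (v ⬝ᵥ H *ᵥ v) + v ⬝ᵥ Q *ᵥ v - r ^ 2 * (v ⬝ᵥ S *ᵥ v) := by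
  have hvX : ∀ w, v ⬝ᵥ X *ᵥ w = r * (v ⬝ᵥ w) := fun w => by
    rw [dotProduct_mulVec, ← mulVec_transpose, hX.eq, hXv, smul_dotProduct, smul_eq_mul]
  have hHt : v ⬝ᵥ Hᵀ *ᵥ v = v ⬝ᵥ H *ᵥ v := by
    rw [mulVec_transpose, dotProduct_comm, ← dotProduct_mulVec]
  simp only [riccati, sub_mulVec, add_mulVec, ← mulVec_mulVec, dotProduct_sub, dotProduct_add,
    hXv, hvX, mulVec_smul, dotProduct_smul, smul_eq_mul, hHt]
  ring

variable [DecidableEq n]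

theorem lipschitzOnWith_riccati (H Q S : Matrix n n ℝ) (R : ℝ) :
    LipschitzOnWith (2 * ‖H‖ + 2 * R * ‖S‖).toNNReal (riccati H Q S) (Metric.closedBall 0 R) := by
  refine LipschitzOnWith.of_dist_le' fun X hX X' hX' => ?_
  rw [mem_closedBall_zero_iff] at hX hX'
  rw [dist_eq_norm, dist_eq_norm]
  have hdiff : riccati H Q S X - riccati H Q S X' =
      H * (X - X') + (X - X') * Hᵀ - ((X - X') * S * X + X' * S * (X - X')) := by
    simp only [riccati, Matrix.mul_sub, Matrix.sub_mul]
    abel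
  rw [hdiff]
  calc _ ≤ ‖H * (X - X')‖ + ‖(X - X') * Hᵀ‖ + (‖(X - X') * S * X‖ + ‖X' * S * (X - X')‖) :=
        (norm_sub_le _ _).trans (add_le_add (norm_add_le _ _) (norm_add_le _ _))
    _ ≤ ‖H‖ * ‖X - X'‖ + ‖X - X'‖ * ‖Hᵀ‖ + (‖X - X'‖ * ‖S‖ * ‖X‖ + ‖X'‖ * ‖S‖ * ‖X - X'‖) := by
        gcongr <;> first | exact norm_mul_le _ _ | exact norm_mul₃_le
    _ ≤ ‖H‖ * ‖X - X'‖ + ‖X - X'‖ * ‖H‖ + (‖X - X'‖ * ‖S‖ * R + R * ‖S‖ * ‖X - X'‖) := by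
        rw [l2_opNorm_transpose_s9]; gcongr
    _ = (2 * ‖H‖ + 2 * R * ‖S‖) * ‖X - X'‖ := by ring

theorem neg_mul_le_dotProduct_riccati_mulVec {X : Matrix n n ℝ} (hQ : Q.PosSemidef)
    (hX : X.IsSymm) {v : EuclideanSpace ℝ n} (hv : ‖v‖ = 1) {δ : ℝ} (hδ : 0 ≤ δ)
    (hXv : X *ᵥ v.ofLp = -δ • v.ofLp) :
    -(δ * (2 * ‖H‖ + δ * ‖S‖)) ≤ v.ofLp ⬝ᵥ riccati H Q S X *ᵥ v.ofLp := by
  have hHv := le_of_abs_le (by simpa [hv] using abs_dotProduct_mulVec_le H v v)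
  have hSv := le_of_abs_le (by simpa [hv] using abs_dotProduct_mulVec_le S v v)
  have hQv : 0 ≤ v.ofLp ⬝ᵥ Q *ᵥ v.ofLp := by simpa using hQ.dotProduct_mulVec_nonneg v.ofLp
  rw [dotProduct_riccati_mulVec_of_mulVec_eq_smul hX hXv]
  nlinarith [mul_le_mul_of_nonneg_left hHv hδ, mul_le_mul_of_nonneg_left hSv (sq_nonneg δ)]

theorem dotProduct_riccati_mulVec_le {X : Matrix n n ℝ} (hS : S.PosSemidef) (hX : X.IsSymm)
    {v : EuclideanSpace ℝ n} (hv : ‖v‖ = 1) {μ r : ℝ} (hH : v.ofLp ⬝ᵥ H *ᵥ v.ofLp ≤ μ)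
    (hr : 0 ≤ r) (hXv : X *ᵥ v.ofLp = r • v.ofLp) :
    v.ofLp ⬝ᵥ riccati H Q S X *ᵥ v.ofLp ≤ 2 * r * μ + ‖Q‖ := by
  have hQv := le_of_abs_le (by simpa [hv] using abs_dotProduct_mulVec_le Q v v)
  have hSv : 0 ≤ v.ofLp ⬝ᵥ S *ᵥ v.ofLp := by simpa using hS.dotProduct_mulVec_nonneg v.ofLp
  rw [dotProduct_riccati_mulVec_of_mulVec_eq_smul hX hXv]
  nlinarith [mul_le_mul_of_nonneg_left hH (mul_nonneg zero_le_two hr), mul_nonneg (sq_nonneg r) hSv]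

theorem hasDerivAt_transpose {Y : ℝ → Matrix n n ℝ} {D : Matrix n n ℝ} {t : ℝ}
    (h : HasDerivAt Y D t) : HasDerivAt (fun s => (Y s)ᵀ) Dᵀ t :=
  (LinearMap.toContinuousLinearMap (transposeLinearEquiv n n ℝ ℝ).toLinearMap).hasFDerivAt
    |>.comp_hasDerivAt t h

theorem riccati_isSymm (hQ : Q.IsSymm) (hS : S.IsSymm)
    (hY : ∀ t ∈ Icc 0 T, HasDerivAt Y (riccati H Q S (Y t)) t) (hY0 : (Y 0).IsSymm) :
    ∀ t ∈ Icc 0 T, (Y t).IsSymm := by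
  have hcont : ContinuousOn Y (Icc 0 T) :=
    continuousOn_of_forall_continuousAt fun t ht => (hY t ht).continuousAt
  obtain ⟨R, hR⟩ := isCompact_Icc.exists_bound_of_continuousOn hcont
  have hYt : ∀ t ∈ Icc 0 T, HasDerivAt (fun s => (Y s)ᵀ) (riccati H Q S (Y t)ᵀ) t :=
    fun t ht => riccati_transpose hQ hS (Y t) ▸ hasDerivAt_transpose (hY t ht)
  have heq := ODE_solution_unique_of_mem_Icc_right (v := fun _ => riccati H Q S)
    (s := fun _ => Metric.closedBall 0 R) (fun _ _ => lipschitzOnWith_riccati H Q S R)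
    (continuousOn_of_forall_continuousAt fun t ht => (hYt t ht).continuousAt)
    (fun t ht => (hYt t (Ico_subset_Icc_self ht)).hasDerivWithinAt)
    (fun t ht => by simpa [l2_opNorm_transpose_s9] using hR t (Ico_subset_Icc_self ht))
    hcont (fun t ht => (hY t (Ico_subset_Icc_self ht)).hasDerivWithinAt)
    (fun t ht => by simpa using hR t (Ico_subset_Icc_self ht)) hY0.eq
  exact fun t ht => heq ht

theorem riccati_posSemidef (hQ : Q.PosSemidef) (hS : S.IsSymm)
    (hY : ∀ t ∈ Icc 0 T, HasDerivAt Y (riccati H Q S (Y t)) t) (hY0 : (Y 0).PosSemidef) :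
    ∀ t ∈ Icc 0 T, (Y t).PosSemidef := by
  intro t ht
  rcases isEmpty_or_nonempty n with hn | hn
  · rw [Subsingleton.elim (Y t) 0]
    exact PosSemidef.zero
  have hsymm := riccati_isSymm (isHermitian_iff_isSymm.mp hQ.isHermitian) hS hY
    (isHermitian_iff_isSymm.mp hY0.isHermitian)
  obtain ⟨R, hR⟩ := isCompact_Icc.exists_bound_of_continuousOn
    (continuousOn_of_forall_continuousAt fun t ht => (hY t ht).continuousAt)
  -- at a crossing the eigenvalue is `-δ` with `δ ≤ R`, so `K` beats the rate `2‖H‖ + δ‖S‖`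
  set K := 2 * ‖H‖ + R * ‖S‖ + 1 with hK
  refine posSemidef_of_infRayleigh_nonneg (isHermitian_iff_isSymm.mpr (hsymm t ht))
    (nonneg_of_forall_pos_add_mul_pos (Real.exp_pos (K * t)) fun ε hε => ?_)
  have h0 : 0 < infRayleigh (Y 0) + ε * Real.exp (K * 0) := by
    simpa using add_pos_of_nonneg_of_pos hY0.infRayleigh_nonneg hε
  refine pos_infRayleigh_add_of_barrier hY (fun s hs => isHermitian_iff_isSymm.mpr (hsymm s hs))
    (fun s _ => hasDerivAt_mul_exp_mul ε K s) h0 (fun s hs v hv hYv => ?_) t ht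
  set δ := ε * Real.exp (K * s)
  have hδ : 0 < δ := by positivity
  have hδR : δ ≤ R := by
    have h := neg_le_of_abs_le (abs_dotProduct_mulVec_le (Y s) v v)
    rw [hYv, dotProduct_smul, EuclideanSpace.ofLp_dotProduct_self, hv] at h
    norm_num at h
    linarith [hR s (Ioc_subset_Icc_self hs)]
  have := neg_mul_le_dotProduct_riccati_mulVec (H := H) (S := S) hQ (hsymm s (Ioc_subset_Icc_self hs)) hv hδ.le hYv
  rw [hK]
  nlinarith [mul_le_mul_of_nonneg_left hδR (mul_nonneg hδ.le (norm_nonneg S))]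

-- `-infRayleigh (-Y t)` is the largest eigenvalue of `Y t`.
theorem riccati_neg_gronwallBound_le_infRayleigh_neg [Nonempty n] (hS : S.PosSemidef) {μ : ℝ}
    (hH : ∀ v : EuclideanSpace ℝ n, ‖v‖ = 1 → v.ofLp ⬝ᵥ H *ᵥ v.ofLp ≤ μ)
    (hY : ∀ t ∈ Icc 0 T, HasDerivAt Y (riccati H Q S (Y t)) t)
    (hpsd : ∀ t ∈ Icc 0 T, (Y t).PosSemidef) :
    ∀ t ∈ Icc 0 T, -gronwallBound ‖Y 0‖ (2 * μ) ‖Q‖ t ≤ infRayleigh (-Y t) := by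
  intro t ht
  set B := gronwallBound ‖Y 0‖ (2 * μ) ‖Q‖
  set K := 2 * μ + 1 with hK
  suffices 0 ≤ infRayleigh (-Y t) + B t by linarith
  refine nonneg_of_forall_pos_add_mul_pos (Real.exp_pos (K * t)) fun ε hε => ?_
  have h0 : 0 < infRayleigh (-Y 0) + (B 0 + ε * Real.exp (K * 0)) := by
    have := neg_norm_le_infRayleigh (-Y 0)
    simp only [norm_neg, B, gronwallBound_x0, mul_zero, Real.exp_zero, mul_one] at this ⊢
    linarith
  have := pos_infRayleigh_add_of_barrier (Y := fun s => -Y s)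
    (β := fun s => B s + ε * Real.exp (K * s))
    (fun s hs => (hY s hs).neg) (fun s hs => (hpsd s hs).isHermitian.neg)
    (fun s _ => (hasDerivAt_gronwallBound _ _ _ s).add (hasDerivAt_mul_exp_mul ε K s)) h0
    (fun s hs v hv hYv => ?_) t ht
  · linarith
  set δ := ε * Real.exp (K * s)
  have hδ : 0 < δ := by positivity
  have hYv' : Y s *ᵥ v.ofLp = (B s + δ) • v.ofLp := by
    simpa only [neg_mulVec, neg_smul, neg_inj] using hYv
  have hβ : 0 ≤ B s + δ := by
    simpa [hYv', EuclideanSpace.ofLp_dotProduct_self, hv] using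
      (hpsd s (Ioc_subset_Icc_self hs)).dotProduct_mulVec_nonneg v.ofLp
  have hsymm : (Y s).IsSymm := isHermitian_iff_isSymm.mp (hpsd s (Ioc_subset_Icc_self hs)).1
  have := dotProduct_riccati_mulVec_le (Q := Q) hS hsymm hv (hH v hv) hβ hYv'
  rw [neg_mulVec, dotProduct_neg, hK]
  linarith

theorem riccati_norm_le_gronwallBound (hQ : Q.PosSemidef) (hS : S.PosSemidef) {μ : ℝ}
    (hH : ∀ v : EuclideanSpace ℝ n, ‖v‖ = 1 → v.ofLp ⬝ᵥ H *ᵥ v.ofLp ≤ μ)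
    (hY : ∀ t ∈ Icc 0 T, HasDerivAt Y (riccati H Q S (Y t)) t) (hY0 : (Y 0).PosSemidef) :
    ∀ t ∈ Icc 0 T, ‖Y t‖ ≤ gronwallBound ‖Y 0‖ (2 * μ) ‖Q‖ t := by
  intro t ht
  have hpsd := riccati_posSemidef hQ (isHermitian_iff_isSymm.mp hS.isHermitian) hY hY0
  have hB := gronwallBound_nonneg (K := 2 * μ) (norm_nonneg (Y 0)) (norm_nonneg Q) ht.1
  rcases isEmpty_or_nonempty n with hn | hn
  · rwa [Subsingleton.elim (Y t) 0, norm_zero]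
  have hlow := riccati_neg_gronwallBound_le_infRayleigh_neg hS hH hY hpsd t ht
  refine l2_opNorm_le_of_posSemidef (hpsd t ht) hB fun x => ?_
  have := infRayleigh_mul_norm_sq_le (-Y t) x
  rw [neg_mulVec, dotProduct_neg] at this
  nlinarith [mul_le_mul_of_nonneg_right hlow (sq_nonneg ‖x‖)]

end Riccati

end Matrix

theorem projected_dre_posdef_and_bound_general {n p q m : ℕ} (T : ℝ)
    (A S : Matrix (Fin n) (Fin n) ℝ) (hS : S.PosSemidef)
    (Z : Matrix (Fin n) (Fin p) ℝ) (C : Matrix (Fin n) (Fin q) ℝ)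
    (V : Matrix (Fin n) (Fin m) ℝ) (hV : Vᵀ * V = 1)
    (Y : ℝ → Matrix (Fin m) (Fin m) ℝ)
    (hY : ∀ t ∈ Set.Icc (0:ℝ) T,
      HasDerivAt Y ((Vᵀ * A * V) * Y t + Y t * (Vᵀ * A * V)ᵀ + (Vᵀ * C) * (Vᵀ * C)ᵀ
        - Y t * (Vᵀ * S * V) * Y t) t)
    (hY0 : Y 0 = (Vᵀ * Z) * (Vᵀ * Z)ᵀ) :
    ∀ t ∈ Set.Icc (0:ℝ) T,
      (V * Y t * Vᵀ).PosSemidef ∧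
      ‖V * Y t * Vᵀ‖ ≤ Real.exp (2 * t * logNorm A) * ‖Z * Zᵀ‖
        + t * phi1 (2 * t * logNorm A) * ‖C * Cᵀ‖ := by
  have hV1 := l2_opNorm_le_one_of_transpose_mul_self_eq_one hV
  have hVt : ‖Vᵀ‖ ≤ 1 := (l2_opNorm_transpose_s9 V).trans_le hV1
  have hgram : ∀ {k : ℕ} (B : Matrix (Fin n) (Fin k) ℝ), ‖(Vᵀ * B) * (Vᵀ * B)ᵀ‖ ≤ ‖B * Bᵀ‖ :=
    fun B => by simpa [transpose_mul, Matrix.mul_assoc] using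
      l2_opNorm_mul_mul_transpose_le hVt (B * Bᵀ)
  have hSk : (Vᵀ * S * V).PosSemidef := by simpa using hS.mul_mul_transpose_same Vᵀ
  have hQk := posSemidef_mul_transpose_self (Vᵀ * C)
  have hY0psd : (Y 0).PosSemidef := hY0 ▸ posSemidef_mul_transpose_self _
  have hpsd := riccati_posSemidef hQk (isHermitian_iff_isSymm.mp hSk.isHermitian) hY hY0psd
  have hnorm := riccati_norm_le_gronwallBound hQk hSk
    (fun _ hv => dotProduct_transpose_mul_mul_mulVec_le_logNorm A hV hv) hY hY0psd
  intro t ht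
  refine ⟨(hpsd t ht).mul_mul_transpose_same V, ?_⟩
  calc ‖V * Y t * Vᵀ‖ ≤ ‖Y t‖ := l2_opNorm_mul_mul_transpose_le hV1 _
    _ ≤ _ := hnorm t ht
    _ ≤ _ := by
      rw [gronwallBound_eq_exp_add_phi1, mul_right_comm 2, hY0]
      gcongr
      · exact hgram Z
      · exact mul_nonneg ht.1 (phi1_nonneg _)
      · exact hgram C

/-- Positivity and norm bound for the numerical solution `X_k = V_k Y_k V_kᵀ`
of the projected DRE. -/
theorem projected_dre_posdef_and_bound {n p q m : ℕ} (T : ℝ) (hT : 0 ≤ T)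
    (A S : Matrix (Fin n) (Fin n) ℝ) (hS : S.PosSemidef)
    (Z : Matrix (Fin n) (Fin p) ℝ) (C : Matrix (Fin n) (Fin q) ℝ)
    (V : Matrix (Fin n) (Fin m) ℝ) (hV : Vᵀ * V = 1)
    (Y : ℝ → Matrix (Fin m) (Fin m) ℝ)
    (hY : ∀ t ∈ Set.Icc (0:ℝ) T,
      HasDerivAt Y ((Vᵀ * A * V) * Y t + Y t * (Vᵀ * A * V)ᵀ + (Vᵀ * C) * (Vᵀ * C)ᵀ
        - Y t * (Vᵀ * S * V) * Y t) t)
    (hY0 : Y 0 = (Vᵀ * Z) * (Vᵀ * Z)ᵀ) :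
    ∀ t ∈ Set.Icc (0:ℝ) T,
      (V * Y t * Vᵀ).PosSemidef ∧
      ‖V * Y t * Vᵀ‖ ≤ Real.exp (2 * t * logNorm A) * ‖Z * Zᵀ‖
        + t * phi1 (2 * t * logNorm A) * ‖C * Cᵀ‖ :=
  projected_dre_posdef_and_bound_general T A S hS Z C V hV Y hY hY0
end
end
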